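/- arXiv:1909.03870 — 6 statements merged into one kernel-verified Lean document; each statement's English description precedes it below -/
import Mathlib

section
/- Let μ ∈ 𝒫(ℝ) have support bounds −∞ ≤ a_μ < b_μ ≤ ∞ and mean λ = ∫ x μ(dx). Let 𝐊ⁿ = {a_μ < K^n_1 < … < K^n_{m_n} < b_μ} be a finite set of strikes with mesh Δ𝐊ⁿ := max_{2≤i≤m_n}(K^n_i − K^n_{i−1}). Then for any μⁿ ∈ 𝒫(ℝ) with ∫ x μⁿ(dx) = λ and C_{μⁿ}(K^n_i) = C_μ(K^n_i) for i = 1,…,m_n, one has (1/2) 𝒲₁(μⁿ, μ) ≤ Δ𝐊ⁿ + K^n_1 − λ + C_μ(K^n_1) + C_μ(K^n_{m_n}). In particular, if Δ𝐊ⁿ → 0, K^n_1 → a_μ and K^n_{m_n} → b_μ as n → ∞, then 𝒲₁(μⁿ, μ) → 0. -/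
/-!
By the quantile coupling, `𝒲₁(ν, μ) ≤ ∫ |F_ν - F_μ|`. Split the line at the extreme strikes.
On a cell `(a, b]` between consecutive strikes, equal call prices at `a` and `b` say that
`∫_a^b ν(t, ∞) dt = ∫_a^b μ(t, ∞) dt`, which forces `ν(b, ∞) ≤ μ(a, ∞)` and symmetrically; so on
the cell `|F_ν - F_μ|` is at most the total mass `ν(a, b] + μ(a, b]`, and the cells contribute at
most twice the mesh. On the tails `|F_ν - F_μ|` is bounded by `F_ν + F_μ`, resp. by
`(1 - F_ν) + (1 - F_μ)`, whose integrals are put, resp. call prices; these agree for `ν` and `μ`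
at the extreme strikes, for puts by put-call parity and equal means. Finally, the put price tends
to `0` as the strike tends to `a_μ`: it vanishes at a finite `a_μ` and is 1-Lipschitz, and tends
to `0` at `-∞` by dominated convergence; symmetrically for the call price at `b_μ`.
-/

open MeasureTheory Filter

namespace MMOT

/-- Call price `C_μ(K) = ∫ (x − K)⁺ μ(dx)`. -/
noncomputable def callPrice (μ : Measure ℝ) (K : ℝ) : ℝ :=
  ∫ x, max (x - K) 0 ∂μ

/-- Wasserstein-1 distance on probability measures on `ℝ`. -/
noncomputable def W1R (μ ν : Measure ℝ) : ℝ :=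
  sInf {r | ∃ γ : Measure (ℝ × ℝ), IsProbabilityMeasure γ ∧ γ.map Prod.fst = μ ∧
    γ.map Prod.snd = ν ∧ Integrable (fun p => |p.1 - p.2|) γ ∧
    r = ∫ p, |p.1 - p.2| ∂γ}

/-- Topological support of a measure on `ℝ`. -/
def msupport (μ : Measure ℝ) : Set ℝ :=
  {x | ∀ ε > 0, 0 < μ (Set.Ioo (x - ε) (x + ε))}

/-- Lower support bound `a_μ ∈ [−∞,∞]`. -/
noncomputable def suppInf (μ : Measure ℝ) : EReal :=
  sInf ((fun x : ℝ => (x : EReal)) '' msupport μ)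

/-- Upper support bound `b_μ ∈ [−∞,∞]`. -/
noncomputable def suppSup (μ : Measure ℝ) : EReal :=
  sSup ((fun x : ℝ => (x : EReal)) '' msupport μ)

open Set ProbabilityTheory Topology
open scoped ENNReal symmDiff

noncomputable def putPrice (μ : Measure ℝ) (K : ℝ) : ℝ :=
  ∫ x, max (K - x) 0 ∂μ

section Prices

variable {ρ : Measure ℝ}

lemma callPrice_nonneg (K : ℝ) : 0 ≤ callPrice ρ K :=
  integral_nonneg fun _ => le_max_right _ _

lemma putPrice_nonneg (K : ℝ) : 0 ≤ putPrice ρ K :=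
  integral_nonneg fun _ => le_max_right _ _

lemma integrable_callPayoff [IsFiniteMeasure ρ] (h : Integrable (fun x : ℝ => x) ρ) (K : ℝ) :
    Integrable (fun x => max (x - K) 0) ρ :=
  (h.sub (integrable_const K)).pos_part

lemma integrable_putPayoff [IsFiniteMeasure ρ] (h : Integrable (fun x : ℝ => x) ρ) (K : ℝ) :
    Integrable (fun x => max (K - x) 0) ρ :=
  ((integrable_const K).sub h).pos_part

lemma put_call_parity [IsProbabilityMeasure ρ] (h : Integrable (fun x : ℝ => x) ρ) (K : ℝ) :
    putPrice ρ K = callPrice ρ K + K - ∫ x, x ∂ρ := by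
  have payoff : ∀ x : ℝ, max (K - x) 0 = max (x - K) 0 + (K - x) := fun x => by
    rcases le_total x K with hx | hx <;> simp [hx]
  simp_rw [putPrice, callPrice, payoff]
  have hsub : Integrable (fun x => K - x) ρ := (integrable_const K).sub h
  rw [integral_add (integrable_callPayoff h K) hsub,
    integral_sub (integrable_const K) h, integral_const, probReal_univ, one_smul, add_sub_assoc]

lemma lintegral_measure_Ioi_eq_callPrice [IsFiniteMeasure ρ] (h : Integrable (fun x : ℝ => x) ρ)
    (K : ℝ) :
    ∫⁻ t in Ioi K, ρ (Ioi t) = ENNReal.ofReal (callPrice ρ K) := by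
  have level : ∀ t ∈ Ioi (0 : ℝ), ρ {x | t < max (x - K) 0} = ρ (Ioi (t + K)) := by
    intro t (ht : 0 < t)
    congr 1
    ext x
    simp [ht.not_gt, lt_sub_iff_add_lt]
  have hpos : ∀ᵐ x ∂ρ, 0 ≤ max (x - K) 0 := ae_of_all _ fun _ => le_max_right _ _
  rw [callPrice, ofReal_integral_eq_lintegral_ofReal (integrable_callPayoff h K) hpos,
    lintegral_eq_lintegral_meas_lt ρ hpos (integrable_callPayoff h K).aemeasurable,
    setLIntegral_congr_fun measurableSet_Ioi level,
    (measurePreserving_add_right volume K).setLIntegral_comp_emb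
      (measurableEmbedding_addRight K) (fun s => ρ (Ioi s)), image_add_const_Ioi, zero_add]

lemma lintegral_measure_Iic_eq_putPrice [IsFiniteMeasure ρ] (h : Integrable (fun x : ℝ => x) ρ)
    (K : ℝ) :
    ∫⁻ t in Iic K, ρ (Iic t) = ENNReal.ofReal (putPrice ρ K) := by
  have level : ∀ t ∈ Ioi (0 : ℝ), ρ {x | t ≤ max (K - x) 0} = ρ (Iic (K - t)) := by
    intro t (ht : 0 < t)
    congr 1
    ext x
    simp [ht.not_ge, le_sub_comm]
  have hpos : ∀ᵐ x ∂ρ, 0 ≤ max (K - x) 0 := ae_of_all _ fun _ => le_max_right _ _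
  rw [putPrice, ofReal_integral_eq_lintegral_ofReal (integrable_putPayoff h K) hpos,
    lintegral_eq_lintegral_meas_le ρ hpos (integrable_putPayoff h K).aemeasurable,
    setLIntegral_congr_fun measurableSet_Ioi level,
    (Measure.measurePreserving_sub_left volume K).setLIntegral_comp_emb
      (measurableEmbedding_subLeft K) (fun s => ρ (Iic s)), image_const_sub_Ioi, sub_zero,
    setLIntegral_congr Iio_ae_eq_Iic]

lemma lipschitzWith_callPrice [IsProbabilityMeasure ρ] (h : Integrable (fun x : ℝ => x) ρ) :
    LipschitzWith 1 (callPrice ρ) := by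
  refine LipschitzWith.of_dist_le_mul fun K K' => ?_
  rw [NNReal.coe_one, one_mul, dist_eq_norm, callPrice, callPrice,
    ← integral_sub (integrable_callPayoff h K) (integrable_callPayoff h K')]
  refine (norm_integral_le_of_norm_le_const (ae_of_all _ fun x => ?_)).trans_eq
    (by rw [probReal_univ, mul_one, dist_comm, Real.dist_eq])
  rw [Real.norm_eq_abs]
  exact (abs_max_sub_max_le_abs _ _ _).trans_eq (by rw [sub_sub_sub_cancel_left])

lemma lipschitzWith_putPrice [IsProbabilityMeasure ρ] (h : Integrable (fun x : ℝ => x) ρ) :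
    LipschitzWith 1 (putPrice ρ) := by
  refine LipschitzWith.of_dist_le_mul fun K K' => ?_
  rw [NNReal.coe_one, one_mul, dist_eq_norm, putPrice, putPrice,
    ← integral_sub (integrable_putPayoff h K) (integrable_putPayoff h K')]
  refine (norm_integral_le_of_norm_le_const (ae_of_all _ fun x => ?_)).trans_eq
    (by rw [probReal_univ, mul_one, Real.dist_eq])
  rw [Real.norm_eq_abs]
  exact (abs_max_sub_max_le_abs _ _ _).trans_eq (by rw [sub_sub_sub_cancel_right])

lemma tendsto_callPrice_atTop [IsFiniteMeasure ρ] (h : Integrable (fun x : ℝ => x) ρ) :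
    Tendsto (callPrice ρ) atTop (𝓝 0) := by
  have := tendsto_integral_filter_of_dominated_convergence (μ := ρ) (l := atTop)
    (F := fun K x => max (x - K) 0) (f := fun _ => 0) (fun x => max x 0)
    (Eventually.of_forall fun K => (integrable_callPayoff h K).aestronglyMeasurable)
    ((eventually_ge_atTop 0).mono fun K hK => ae_of_all _ fun x => by
      rw [Real.norm_eq_abs, abs_of_nonneg (le_max_right _ _)]
      exact max_le_max (by linarith) le_rfl)
    (by simpa using integrable_callPayoff h 0)
    (ae_of_all _ fun x => tendsto_const_nhds.congr' <|
      (eventually_ge_atTop x).mono fun K hK => (max_eq_right (by linarith)).symm)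
  rw [integral_zero] at this
  exact this

lemma tendsto_putPrice_atBot [IsFiniteMeasure ρ] (h : Integrable (fun x : ℝ => x) ρ) :
    Tendsto (putPrice ρ) atBot (𝓝 0) := by
  have := tendsto_integral_filter_of_dominated_convergence (μ := ρ) (l := atBot)
    (F := fun K x => max (K - x) 0) (f := fun _ => 0) (fun x => max (-x) 0)
    (Eventually.of_forall fun K => (integrable_putPayoff h K).aestronglyMeasurable)
    ((eventually_le_atBot 0).mono fun K hK => ae_of_all _ fun x => by
      rw [Real.norm_eq_abs, abs_of_nonneg (le_max_right _ _)]
      exact max_le_max (by linarith) le_rfl)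
    (by simpa using integrable_putPayoff h 0)
    (ae_of_all _ fun x => tendsto_const_nhds.congr' <|
      (eventually_le_atBot x).mono fun K hK => (max_eq_right (by linarith)).symm)
  rw [integral_zero] at this
  exact this

end Prices

section Support

lemma measure_compl_msupport (μ : Measure ℝ) : μ (msupport μ)ᶜ = 0 := by
  refine measure_null_of_locally_null _ fun x hx => ?_
  simp only [msupport, mem_compl_iff, mem_ofPred_eq, not_forall, not_lt, nonpos_iff_eq_zero] at hx
  obtain ⟨ε, hε, hx⟩ := hx
  exact ⟨Ioo (x - ε) (x + ε),
    mem_nhdsWithin_of_mem_nhds (Ioo_mem_nhds (by linarith) (by linarith)), hx⟩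

variable {μ : Measure ℝ}

lemma msupport_nonempty [NeZero μ] : (msupport μ).Nonempty := by
  rw [nonempty_iff_ne_empty]
  intro h
  have := measure_compl_msupport μ
  rw [h, compl_empty, Measure.measure_univ_eq_zero] at this
  exact NeZero.ne μ this

lemma suppInf_ne_top [NeZero μ] : suppInf μ ≠ ⊤ := by
  obtain ⟨x, hx⟩ := msupport_nonempty (μ := μ)
  exact ne_top_of_le_ne_top (EReal.coe_ne_top x) (sInf_le ⟨x, hx, rfl⟩)

lemma suppSup_ne_bot [NeZero μ] : suppSup μ ≠ ⊥ := by
  obtain ⟨x, hx⟩ := msupport_nonempty (μ := μ)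
  exact ne_bot_of_le_ne_bot (EReal.coe_ne_bot x) (le_sSup ⟨x, hx, rfl⟩)

lemma measure_Iio_suppInf {a : ℝ} (ha : suppInf μ = a) : μ (Iio a) = 0 :=
  measure_mono_null (fun x (hx : x < a) hmem => hx.not_ge <|
    EReal.coe_le_coe_iff.1 (ha ▸ sInf_le ⟨x, hmem, rfl⟩)) (measure_compl_msupport μ)

lemma measure_Ioi_suppSup {b : ℝ} (hb : suppSup μ = b) : μ (Ioi b) = 0 :=
  measure_mono_null (fun x (hx : b < x) hmem => hx.not_ge <|
    EReal.coe_le_coe_iff.1 (hb ▸ le_sSup ⟨x, hmem, rfl⟩)) (measure_compl_msupport μ)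

lemma putPrice_suppInf {a : ℝ} (ha : suppInf μ = a) : putPrice μ a = 0 := by
  refine integral_eq_zero_of_ae ?_
  filter_upwards [measure_eq_zero_iff_ae_notMem.1 (measure_Iio_suppInf ha)] with x hx
  simpa using hx

lemma callPrice_suppSup {b : ℝ} (hb : suppSup μ = b) : callPrice μ b = 0 := by
  refine integral_eq_zero_of_ae ?_
  filter_upwards [measure_eq_zero_iff_ae_notMem.1 (measure_Ioi_suppSup hb)] with x hx
  simpa using hx

lemma tendsto_putPrice_of_tendsto_suppInf [IsProbabilityMeasure μ]
    (hμ : Integrable (fun x : ℝ => x) μ) {α : Type*} {l : Filter α} {k : α → ℝ}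
    (hk : Tendsto (fun n => (k n : EReal)) l (𝓝 (suppInf μ))) :
    Tendsto (fun n => putPrice μ (k n)) l (𝓝 0) := by
  cases ha : suppInf μ using EReal.rec with
  | bot =>
    rw [ha, EReal.tendsto_coe_nhds_bot_iff] at hk
    exact (tendsto_putPrice_atBot hμ).comp hk
  | coe a =>
    rw [ha, EReal.tendsto_coe] at hk
    have := ((lipschitzWith_putPrice hμ).continuous.tendsto a).comp hk
    rwa [putPrice_suppInf ha] at this
  | top => exact absurd ha suppInf_ne_top

lemma tendsto_callPrice_of_tendsto_suppSup [IsProbabilityMeasure μ]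
    (hμ : Integrable (fun x : ℝ => x) μ) {α : Type*} {l : Filter α} {k : α → ℝ}
    (hk : Tendsto (fun n => (k n : EReal)) l (𝓝 (suppSup μ))) :
    Tendsto (fun n => callPrice μ (k n)) l (𝓝 0) := by
  cases hb : suppSup μ using EReal.rec with
  | bot => exact absurd hb suppSup_ne_bot
  | coe b =>
    rw [hb, EReal.tendsto_coe] at hk
    have := ((lipschitzWith_callPrice hμ).continuous.tendsto b).comp hk
    rwa [callPrice_suppSup hb] at this
  | top =>
    rw [hb, EReal.tendsto_coe_nhds_top_iff] at hk
    exact (tendsto_callPrice_atTop hμ).comp hk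

end Support

section Coupling

lemma Ici_symmDiff_Ici {α : Type*} [LinearOrder α] (a b : α) :
    Ici a ∆ Ici b = Ico (min a b) (max a b) := by
  ext x
  simp only [mem_symmDiff, mem_Ici, mem_Ico, min_le_iff, lt_max_iff]
  grind

lemma Iic_symmDiff_Iic {α : Type*} [LinearOrder α] (a b : α) :
    Iic a ∆ Iic b = Ioc (min a b) (max a b) := by
  ext x
  simp only [mem_symmDiff, mem_Iic, mem_Ioc, min_lt_iff, le_max_iff]
  grind

lemma volume_inter_Ioo_zero_one {s : Set ℝ} (hs : s ⊆ Icc 0 1) :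
    volume (s ∩ Ioo 0 1) = volume s := by
  rw [measure_congr ((ae_eq_refl s).inter Ioo_ae_eq_Icc), inter_eq_left.2 hs]

variable {ρ : Measure ℝ}

noncomputable def quantile (ρ : Measure ℝ) (u : ℝ) : ℝ :=
  if u ∈ Ioo 0 1 then sInf {x | u ≤ cdf ρ x} else 0

lemma bddBelow_le_cdf {u : ℝ} (hu : 0 < u) : BddBelow {x | u ≤ cdf ρ x} := by
  obtain ⟨a, ha⟩ := eventually_atBot.1 ((tendsto_cdf_atBot ρ).eventually_lt_const hu)
  exact ⟨a, fun x hx => le_of_not_ge fun hxa => (ha x hxa).not_ge hx⟩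

lemma nonempty_le_cdf {u : ℝ} (hu : u < 1) : {x | u ≤ cdf ρ x}.Nonempty :=
  ((tendsto_cdf_atTop ρ).eventually_const_le hu).exists

lemma quantile_le_iff [IsProbabilityMeasure ρ] {u t : ℝ} (hu : u ∈ Ioo 0 1) :
    quantile ρ u ≤ t ↔ u ≤ cdf ρ t := by
  rw [quantile, if_pos hu]
  refine ⟨fun ht => ?_, fun ht => csInf_le (bddBelow_le_cdf hu.1) ht⟩
  suffices u ≤ cdf ρ (sInf {x | u ≤ cdf ρ x}) from this.trans (monotone_cdf ρ ht)
  -- `cdf ρ ≥ u` on the right of the infimum, and `cdf ρ` is right-continuous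
  refine ge_of_tendsto (((cdf ρ).right_continuous _).mono Ioi_subset_Ici_self) ?_
  filter_upwards [self_mem_nhdsWithin] with x hx
  obtain ⟨y, hy, hyx⟩ := exists_lt_of_csInf_lt (nonempty_le_cdf hu.2) hx
  exact hy.trans (monotone_cdf ρ hyx.le)

@[fun_prop]
lemma measurable_quantile [IsProbabilityMeasure ρ] : Measurable (quantile ρ) := by
  refine measurable_of_Iic fun t => ?_
  have : quantile ρ ⁻¹' Iic t = Ioo 0 1 ∩ Iic (cdf ρ t) ∪ (Ioo 0 1)ᶜ ∩ {_u | 0 ≤ t} := by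
    ext u
    by_cases hu : u ∈ Ioo 0 1
    · simp [quantile_le_iff hu, hu]
    · simp [quantile, hu]
  rw [this]
  exact (measurableSet_Ioo.inter measurableSet_Iic).union
    (measurableSet_Ioo.compl.inter (MeasurableSet.const _))

lemma map_quantile [IsProbabilityMeasure ρ] : (volume.restrict (Ioo 0 1)).map (quantile ρ) = ρ := by
  refine Measure.ext_of_Iic _ _ fun t => ?_
  have : quantile ρ ⁻¹' Iic t ∩ Ioo 0 1 = Ioc 0 (cdf ρ t) ∩ Ioo 0 1 := by
    ext u
    simp only [mem_inter_iff, mem_preimage, mem_Iic, mem_Ioc]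
    exact ⟨fun h => ⟨⟨h.2.1, (quantile_le_iff h.2).1 h.1⟩, h.2⟩,
      fun h => ⟨(quantile_le_iff h.2).2 h.1.2, h.2⟩⟩
  rw [Measure.map_apply measurable_quantile measurableSet_Iic,
    Measure.restrict_apply (measurable_quantile measurableSet_Iic), this,
    volume_inter_Ioo_zero_one (Ioc_subset_Icc_self.trans (Icc_subset_Icc le_rfl (cdf_le_one ρ t))),
    Real.volume_Ioc, sub_zero, ofReal_cdf]

variable {ν μ : Measure ℝ} [IsProbabilityMeasure ν] [IsProbabilityMeasure μ]

lemma lintegral_abs_quantile_sub :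
    ∫⁻ u in Ioo 0 1, ENNReal.ofReal |quantile ν u - quantile μ u| =
      ∫⁻ t, ENNReal.ofReal |cdf ν t - cdf μ t| := by
  -- both sides are the area of the region between the graphs of the quantiles
  set E : Set (ℝ × ℝ) := {p | quantile ν p.1 ≤ p.2} ∆ {p | quantile μ p.1 ≤ p.2}
  have hE : MeasurableSet E :=
    (measurableSet_le (measurable_quantile.comp measurable_fst) measurable_snd).symmDiff
      (measurableSet_le (measurable_quantile.comp measurable_fst) measurable_snd)
  have vertical (u : ℝ) :
      volume (Prod.mk u ⁻¹' E) = ENNReal.ofReal |quantile ν u - quantile μ u| := by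
    rw [show Prod.mk u ⁻¹' E = Ici (quantile ν u) ∆ Ici (quantile μ u) from rfl, Ici_symmDiff_Ici,
      Real.volume_Ico, max_sub_min_eq_abs, abs_sub_comm]
  have horizontal (t : ℝ) : volume.restrict (Ioo 0 1) ((fun u => (u, t)) ⁻¹' E) =
      ENNReal.ofReal |cdf ν t - cdf μ t| := by
    have : (fun u => (u, t)) ⁻¹' E ∩ Ioo 0 1 = Iic (cdf ν t) ∆ Iic (cdf μ t) ∩ Ioo 0 1 := by
      ext u
      simp only [mem_inter_iff, and_congr_left_iff]
      intro hu
      simp only [E, mem_symmDiff, mem_preimage, mem_ofPred_eq, mem_Iic, quantile_le_iff hu]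
    rw [Measure.restrict_apply (hE.preimage measurable_prodMk_right), this,
      Iic_symmDiff_Iic, volume_inter_Ioo_zero_one, Real.volume_Ioc, max_sub_min_eq_abs,
      abs_sub_comm]
    exact Ioc_subset_Icc_self.trans (Icc_subset_Icc (le_min (cdf_nonneg ν t) (cdf_nonneg μ t))
      (max_le (cdf_le_one ν t) (cdf_le_one μ t)))
  simp_rw [← vertical, ← horizontal]
  rw [← Measure.prod_apply hE, Measure.prod_apply_symm hE]

lemma W1R_nonneg (ν μ : Measure ℝ) : 0 ≤ W1R ν μ :=
  Real.sInf_nonneg fun _ ⟨_, _, _, _, _, hr⟩ => hr ▸ integral_nonneg fun _ => abs_nonneg _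

lemma W1R_le_integral {ν μ : Measure ℝ} (γ : Measure (ℝ × ℝ)) [IsProbabilityMeasure γ]
    (hν : γ.map Prod.fst = ν) (hμ : γ.map Prod.snd = μ)
    (hγ : Integrable (fun p => |p.1 - p.2|) γ) : W1R ν μ ≤ ∫ p, |p.1 - p.2| ∂γ :=
  csInf_le ⟨0, fun _ ⟨_, _, _, _, _, hr⟩ => hr ▸ integral_nonneg fun _ => abs_nonneg _⟩
    ⟨γ, inferInstance, hν, hμ, hγ, rfl⟩

lemma W1R_le_of_lintegral_abs_cdf_sub_le {B : ℝ} (hB : 0 ≤ B)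
    (h : ∫⁻ t, ENNReal.ofReal |cdf ν t - cdf μ t| ≤ ENNReal.ofReal B) : W1R ν μ ≤ B := by
  set P := volume.restrict (Ioo (0 : ℝ) 1)
  set f : ℝ → ℝ × ℝ := fun u => (quantile ν u, quantile μ u)
  have hf : Measurable f := by fun_prop
  have hcost : AEStronglyMeasurable (fun p : ℝ × ℝ => |p.1 - p.2|) (P.map f) := by fun_prop
  have hlint : ∫⁻ u, ENNReal.ofReal |quantile ν u - quantile μ u| ∂P ≤ ENNReal.ofReal B :=
    lintegral_abs_quantile_sub.trans_le h
  have hint : Integrable (fun u => |quantile ν u - quantile μ u|) P :=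
    ⟨by fun_prop, (hasFiniteIntegral_iff_ofReal (ae_of_all _ fun _ => abs_nonneg _)).2
      (hlint.trans_lt ENNReal.ofReal_lt_top)⟩
  have : IsProbabilityMeasure P := ⟨by simp [P]⟩
  have : IsProbabilityMeasure (P.map f) := Measure.isProbabilityMeasure_map hf.aemeasurable
  refine (W1R_le_integral (P.map f)
    (by rw [Measure.map_map measurable_fst hf]; exact map_quantile)
    (by rw [Measure.map_map measurable_snd hf]; exact map_quantile)
    ((integrable_map_measure hcost hf.aemeasurable).2 hint)).trans ?_
  rw [integral_map hf.aemeasurable hcost, integral_eq_lintegral_of_nonneg_ae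
    (ae_of_all _ fun _ => abs_nonneg _) hint.aestronglyMeasurable]
  exact ENNReal.toReal_le_of_le_ofReal hB hlint

end Coupling

lemma measure_Ioi_eq_ofReal_one_sub_cdf (ρ : Measure ℝ) [IsProbabilityMeasure ρ] (t : ℝ) :
    ρ (Ioi t) = ENNReal.ofReal (1 - cdf ρ t) := by
  rw [← compl_Iic, prob_compl_eq_one_sub measurableSet_Iic, ← ofReal_cdf, ← ENNReal.ofReal_one,
    ENNReal.ofReal_sub _ (cdf_nonneg ρ t)]

lemma measure_Ioc_eq_ofReal_cdf_sub (ρ : Measure ℝ) [IsProbabilityMeasure ρ] (a b : ℝ) :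
    ρ (Ioc a b) = ENNReal.ofReal (cdf ρ b - cdf ρ a) := by
  rw [← StieltjesFunction.measure_Ioc, measure_cdf]

section Cells

variable {ν μ : Measure ℝ} [IsProbabilityMeasure ν] [IsProbabilityMeasure μ] {a b : ℝ}

lemma lintegral_Ioc_measure_Ioi_add_callPrice {ρ : Measure ℝ} [IsFiniteMeasure ρ]
    (h : Integrable (fun x : ℝ => x) ρ) (hab : a ≤ b) :
    (∫⁻ t in Ioc a b, ρ (Ioi t)) + ENNReal.ofReal (callPrice ρ b) =
      ENNReal.ofReal (callPrice ρ a) := by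
  rw [← lintegral_measure_Ioi_eq_callPrice h, ← lintegral_measure_Ioi_eq_callPrice h,
    ← lintegral_union measurableSet_Ioi Ioc_disjoint_Ioi_same, Ioc_union_Ioi_eq_Ioi hab]

lemma lintegral_Ioc_measure_Ioi_eq (hν : Integrable (fun x : ℝ => x) ν)
    (hμ : Integrable (fun x : ℝ => x) μ) (hab : a ≤ b)
    (ha : callPrice ν a = callPrice μ a) (hb : callPrice ν b = callPrice μ b) :
    ∫⁻ t in Ioc a b, ν (Ioi t) = ∫⁻ t in Ioc a b, μ (Ioi t) := by
  have hν' := lintegral_Ioc_measure_Ioi_add_callPrice hν hab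
  rw [ha, hb, ← lintegral_Ioc_measure_Ioi_add_callPrice hμ hab] at hν'
  exact (ENNReal.add_left_inj ENNReal.ofReal_ne_top).1 hν'

lemma cdf_le_cdf_of_lintegral_Ioc_eq (hab : a < b)
    (h : ∫⁻ t in Ioc a b, ν (Ioi t) = ∫⁻ t in Ioc a b, μ (Ioi t)) : cdf μ a ≤ cdf ν b := by
  have hI : volume (Ioc a b) ≠ 0 := by simpa [Real.volume_Ioc] using hab
  have key : ν (Ioi b) * volume (Ioc a b) ≤ μ (Ioi a) * volume (Ioc a b) := by
    calc ν (Ioi b) * volume (Ioc a b) = ∫⁻ _ in Ioc a b, ν (Ioi b) := (setLIntegral_const _ _).symm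
      _ ≤ ∫⁻ t in Ioc a b, ν (Ioi t) :=
        setLIntegral_mono' measurableSet_Ioc fun t ht => measure_mono (Ioi_subset_Ioi ht.2)
      _ = ∫⁻ t in Ioc a b, μ (Ioi t) := h
      _ ≤ ∫⁻ _ in Ioc a b, μ (Ioi a) :=
        setLIntegral_mono' measurableSet_Ioc fun t ht => measure_mono (Ioi_subset_Ioi ht.1.le)
      _ = μ (Ioi a) * volume (Ioc a b) := setLIntegral_const _ _
  rw [ENNReal.mul_le_mul_iff_left hI (by simp [Real.volume_Ioc]),
    measure_Ioi_eq_ofReal_one_sub_cdf, measure_Ioi_eq_ofReal_one_sub_cdf,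
    ENNReal.ofReal_le_ofReal_iff (by linarith [cdf_le_one μ a])] at key
  linarith

lemma lintegral_Ioc_abs_cdf_sub_le (hν : Integrable (fun x : ℝ => x) ν)
    (hμ : Integrable (fun x : ℝ => x) μ) (hab : a ≤ b)
    (ha : callPrice ν a = callPrice μ a) (hb : callPrice ν b = callPrice μ b) :
    ∫⁻ t in Ioc a b, ENNReal.ofReal |cdf ν t - cdf μ t| ≤
      ENNReal.ofReal (b - a) * (ν (Ioc a b) + μ (Ioc a b)) := by
  rcases hab.eq_or_lt with rfl | hab
  · simp
  have h := lintegral_Ioc_measure_Ioi_eq hν hμ hab.le ha hb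
  have hμν := cdf_le_cdf_of_lintegral_Ioc_eq hab h
  have hνμ := cdf_le_cdf_of_lintegral_Ioc_eq hab h.symm
  have pointwise :
      ∀ t ∈ Ioc a b, ENNReal.ofReal |cdf ν t - cdf μ t| ≤ ν (Ioc a b) + μ (Ioc a b) := by
    intro t ht
    have := monotone_cdf ν ht.1.le
    have := monotone_cdf ν ht.2
    have := monotone_cdf μ ht.1.le
    have := monotone_cdf μ ht.2
    rw [measure_Ioc_eq_ofReal_cdf_sub, measure_Ioc_eq_ofReal_cdf_sub,
      ← ENNReal.ofReal_add (by linarith) (by linarith)]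
    exact ENNReal.ofReal_le_ofReal (abs_le.2 ⟨by linarith, by linarith⟩)
  calc ∫⁻ t in Ioc a b, ENNReal.ofReal |cdf ν t - cdf μ t|
      ≤ ∫⁻ _ in Ioc a b, (ν (Ioc a b) + μ (Ioc a b)) :=
        setLIntegral_mono' measurableSet_Ioc pointwise
    _ = ENNReal.ofReal (b - a) * (ν (Ioc a b) + μ (Ioc a b)) := by
        rw [setLIntegral_const, Real.volume_Ioc, mul_comm]

end Cells

noncomputable def mesh {m : ℕ} (K : Fin (m + 1) → ℝ) : ℝ :=
  ⨆ i : Fin m, (K i.succ - K i.castSucc)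

lemma sub_le_mesh {m : ℕ} (K : Fin (m + 1) → ℝ) (i : Fin m) : K i.succ - K i.castSucc ≤ mesh K :=
  le_ciSup (f := fun i : Fin m => K i.succ - K i.castSucc) (Set.finite_range _).bddAbove i

lemma mesh_nonneg {m : ℕ} {K : Fin (m + 1) → ℝ} (hK : Monotone K) : 0 ≤ mesh K :=
  Real.iSup_nonneg fun i => sub_nonneg.2 (hK i.castSucc_le_succ)

section Strikes

variable {ν μ : Measure ℝ} [IsProbabilityMeasure ν] [IsProbabilityMeasure μ]

lemma lintegral_Ioc_abs_cdf_sub_le_of_gaps (hν : Integrable (fun x : ℝ => x) ν)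
    (hμ : Integrable (fun x : ℝ => x) μ) {Δ : ℝ} :
    ∀ {m : ℕ} {K : Fin (m + 1) → ℝ}, Monotone K → (∀ i, callPrice ν (K i) = callPrice μ (K i)) →
      (∀ i : Fin m, K i.succ - K i.castSucc ≤ Δ) →
      ∫⁻ t in Ioc (K 0) (K (Fin.last m)), ENNReal.ofReal |cdf ν t - cdf μ t| ≤
        ENNReal.ofReal Δ * (ν (Ioc (K 0) (K (Fin.last m))) + μ (Ioc (K 0) (K (Fin.last m))))
  | 0, _, _, _, _ => by simp
  | m + 1, K, hK, hcall, hgap => by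
    set a := K (Fin.last m).castSucc
    have ih := lintegral_Ioc_abs_cdf_sub_le_of_gaps hν hμ (K := fun i => K i.castSucc)
      (hK.comp Fin.strictMono_castSucc.monotone) (fun i => hcall _) (fun i => hgap i.castSucc)
    have hcell := lintegral_Ioc_abs_cdf_sub_le hν hμ (hK (Fin.last m).castSucc_le_succ)
      (hcall _) (hcall _)
    rw [Fin.succ_last] at hcell
    simp only [Fin.castSucc_zero] at ih
    have h0a : K 0 ≤ a := hK (Fin.zero_le _)
    have hab : a ≤ K (Fin.last (m + 1)) := hK (Fin.le_last _)
    rw [← Ioc_union_Ioc_eq_Ioc h0a hab, lintegral_union measurableSet_Ioc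
      (Ioc_disjoint_Ioc_of_le le_rfl), measure_union (Ioc_disjoint_Ioc_of_le le_rfl)
      measurableSet_Ioc, measure_union (Ioc_disjoint_Ioc_of_le le_rfl) measurableSet_Ioc]
    calc _ ≤ ENNReal.ofReal Δ * (ν (Ioc (K 0) a) + μ (Ioc (K 0) a)) +
          ENNReal.ofReal (K (Fin.last (m + 1)) - a) *
            (ν (Ioc a (K (Fin.last (m + 1)))) + μ (Ioc a (K (Fin.last (m + 1))))) :=
          add_le_add ih hcell
      _ ≤ ENNReal.ofReal Δ * (ν (Ioc (K 0) a) + μ (Ioc (K 0) a)) +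
          ENNReal.ofReal Δ *
            (ν (Ioc a (K (Fin.last (m + 1)))) + μ (Ioc a (K (Fin.last (m + 1))))) := by
          gcongr
          simpa [a, Fin.succ_last] using hgap (Fin.last m)
      _ = _ := by ring

lemma lintegral_Ioc_abs_cdf_sub_le_mesh (hν : Integrable (fun x : ℝ => x) ν)
    (hμ : Integrable (fun x : ℝ => x) μ) {m : ℕ} {K : Fin (m + 1) → ℝ} (hK : Monotone K)
    (hcall : ∀ i, callPrice ν (K i) = callPrice μ (K i)) :
    ∫⁻ t in Ioc (K 0) (K (Fin.last m)), ENNReal.ofReal |cdf ν t - cdf μ t| ≤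
      2 * ENNReal.ofReal (mesh K) := by
  refine (lintegral_Ioc_abs_cdf_sub_le_of_gaps hν hμ hK hcall (sub_le_mesh K)).trans ?_
  calc ENNReal.ofReal (mesh K) * (ν _ + μ _) ≤ ENNReal.ofReal (mesh K) * (1 + 1) := by
        gcongr <;> exact prob_le_one
    _ = 2 * ENNReal.ofReal (mesh K) := by ring

lemma setLIntegral_Ioi_abs_cdf_sub_le (hν : Integrable (fun x : ℝ => x) ν)
    (hμ : Integrable (fun x : ℝ => x) μ) (K : ℝ) :
    ∫⁻ t in Ioi K, ENNReal.ofReal |cdf ν t - cdf μ t| ≤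
      ENNReal.ofReal (callPrice ν K) + ENNReal.ofReal (callPrice μ K) := by
  rw [← lintegral_measure_Ioi_eq_callPrice hν, ← lintegral_measure_Ioi_eq_callPrice hμ,
    ← lintegral_add_left (Antitone.measurable fun s t hst => measure_mono (Ioi_subset_Ioi hst))]
  refine setLIntegral_mono' measurableSet_Ioi fun t _ => ?_
  have hν1 := cdf_le_one ν t
  have hμ1 := cdf_le_one μ t
  rw [measure_Ioi_eq_ofReal_one_sub_cdf, measure_Ioi_eq_ofReal_one_sub_cdf,
    ← ENNReal.ofReal_add (by linarith) (by linarith)]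
  exact ENNReal.ofReal_le_ofReal (abs_le.2 ⟨by linarith, by linarith⟩)

lemma setLIntegral_Iic_abs_cdf_sub_le (hν : Integrable (fun x : ℝ => x) ν)
    (hμ : Integrable (fun x : ℝ => x) μ) (K : ℝ) :
    ∫⁻ t in Iic K, ENNReal.ofReal |cdf ν t - cdf μ t| ≤
      ENNReal.ofReal (putPrice ν K) + ENNReal.ofReal (putPrice μ K) := by
  rw [← lintegral_measure_Iic_eq_putPrice hν, ← lintegral_measure_Iic_eq_putPrice hμ,
    ← lintegral_add_left (Monotone.measurable fun s t hst => measure_mono (Iic_subset_Iic.2 hst))]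
  refine setLIntegral_mono' measurableSet_Iic fun t _ => ?_
  rw [← ofReal_cdf, ← ofReal_cdf, ← ENNReal.ofReal_add (cdf_nonneg ν t) (cdf_nonneg μ t)]
  exact ENNReal.ofReal_le_ofReal (abs_sub _ _ |>.trans_eq
    (by rw [abs_of_nonneg (cdf_nonneg ν t), abs_of_nonneg (cdf_nonneg μ t)]))

lemma lintegral_abs_cdf_sub_le (hν : Integrable (fun x : ℝ => x) ν)
    (hμ : Integrable (fun x : ℝ => x) μ) (hmean : ∫ x, x ∂ν = ∫ x, x ∂μ)
    {m : ℕ} {K : Fin (m + 1) → ℝ} (hK : Monotone K)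
    (hcall : ∀ i, callPrice ν (K i) = callPrice μ (K i)) :
    ∫⁻ t, ENNReal.ofReal |cdf ν t - cdf μ t| ≤
      ENNReal.ofReal (2 * (mesh K + putPrice μ (K 0) + callPrice μ (K (Fin.last m)))) := by
  have hput : putPrice ν (K 0) = putPrice μ (K 0) := by
    rw [put_call_parity hν, put_call_parity hμ, hcall, hmean]
  have hsplit :
      (univ : Set ℝ) = Iic (K 0) ∪ (Ioc (K 0) (K (Fin.last m)) ∪ Ioi (K (Fin.last m))) := by
    rw [Ioc_union_Ioi_eq_Ioi (hK (Fin.zero_le _)), Iic_union_Ioi]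
  have left := setLIntegral_Iic_abs_cdf_sub_le hν hμ (K 0)
  have right := setLIntegral_Ioi_abs_cdf_sub_le hν hμ (K (Fin.last m))
  rw [hput] at left
  rw [hcall] at right
  rw [← setLIntegral_univ, hsplit, lintegral_union (measurableSet_Ioc.union measurableSet_Ioi)
    (Iic_disjoint_Ioc le_rfl |>.union_right (Iic_disjoint_Ioi (hK (Fin.zero_le _)))),
    lintegral_union measurableSet_Ioi Ioc_disjoint_Ioi_same]
  calc _ ≤ (ENNReal.ofReal (putPrice μ (K 0)) + ENNReal.ofReal (putPrice μ (K 0))) +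
        (2 * ENNReal.ofReal (mesh K) + (ENNReal.ofReal (callPrice μ (K (Fin.last m))) +
          ENNReal.ofReal (callPrice μ (K (Fin.last m))))) :=
        add_le_add left (add_le_add (lintegral_Ioc_abs_cdf_sub_le_mesh hν hμ hK hcall) right)
    _ = _ := by
        rw [ENNReal.ofReal_mul zero_le_two, ENNReal.ofReal_add (add_nonneg (mesh_nonneg hK)
          (putPrice_nonneg _)) (callPrice_nonneg _), ENNReal.ofReal_add (mesh_nonneg hK)
          (putPrice_nonneg _), ENNReal.ofReal_ofNat]
        ring

end Strikes

lemma W1R_le_finite_strikes {ν μ : Measure ℝ} [IsProbabilityMeasure ν] [IsProbabilityMeasure μ]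
    (hν : Integrable (fun x : ℝ => x) ν) (hμ : Integrable (fun x : ℝ => x) μ)
    (hmean : ∫ x, x ∂ν = ∫ x, x ∂μ) {m : ℕ} {K : Fin (m + 1) → ℝ} (hK : Monotone K)
    (hcall : ∀ i, callPrice ν (K i) = callPrice μ (K i)) :
    W1R ν μ ≤ 2 * (mesh K + putPrice μ (K 0) + callPrice μ (K (Fin.last m))) :=
  W1R_le_of_lintegral_abs_cdf_sub_le
    (mul_nonneg zero_le_two <| add_nonneg (add_nonneg (mesh_nonneg hK) (putPrice_nonneg _))
      (callPrice_nonneg _))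
    (lintegral_abs_cdf_sub_le hν hμ hmean hK hcall)

theorem finite_strikes_stability_general (μ : Measure ℝ)
    (hμ : IsProbabilityMeasure μ) (hmom : Integrable (fun x : ℝ => x) μ)
    (m : ℕ → ℕ) (K : ∀ n, Fin (m n + 1) → ℝ)
    (hK : ∀ n, StrictMono (K n))
    (μn : ℕ → Measure ℝ)
    (hμn : ∀ n, IsProbabilityMeasure (μn n))
    (hmomn : ∀ n, Integrable (fun x : ℝ => x) (μn n))
    (hmean : ∀ n, ∫ x, x ∂(μn n) = ∫ x, x ∂μ)
    (hcall : ∀ n i, callPrice (μn n) (K n i) = callPrice μ (K n i)) :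
    (∀ n, (1 / 2) * W1R (μn n) μ ≤
      (⨆ i : Fin (m n), (K n i.succ - K n i.castSucc)) + K n 0 - (∫ x, x ∂μ)
        + callPrice μ (K n 0) + callPrice μ (K n (Fin.last (m n)))) ∧
    (Tendsto (fun n => ⨆ i : Fin (m n), (K n i.succ - K n i.castSucc)) atTop (nhds 0) →
      Tendsto (fun n => ((K n 0 : ℝ) : EReal)) atTop (nhds (suppInf μ)) →
      Tendsto (fun n => ((K n (Fin.last (m n)) : ℝ) : EReal)) atTop (nhds (suppSup μ)) →
      Tendsto (fun n => W1R (μn n) μ) atTop (nhds 0)) := by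
  have hW (n : ℕ) : W1R (μn n) μ ≤
      2 * (mesh (K n) + putPrice μ (K n 0) + callPrice μ (K n (Fin.last (m n)))) :=
    have := hμn n
    W1R_le_finite_strikes (hmomn n) hmom (hmean n) (hK n).monotone (hcall n)
  refine ⟨fun n => ?_, fun hmesh hfirst hlast => ?_⟩
  · have := hW n
    rw [put_call_parity hmom, mesh] at this
    linarith
  · have hbound := ((hmesh.add (tendsto_putPrice_of_tendsto_suppInf hmom hfirst)).add
      (tendsto_callPrice_of_tendsto_suppSup hmom hlast)).const_mul 2
    rw [add_zero, add_zero, mul_zero] at hbound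
    exact squeeze_zero (fun n => W1R_nonneg _ _) hW hbound

/-- Proposition: stability under finitely many quoted call options.
If `μⁿ` has the same mean as `μ` and the same call prices at the strikes
`Kⁿ_0 < … < Kⁿ_{mₙ}` lying strictly between the support bounds of `μ`, then
`(1/2)𝒲₁(μⁿ,μ) ≤ Δ𝐊ⁿ + Kⁿ_0 − λ + C_μ(Kⁿ_0) + C_μ(Kⁿ_{mₙ})`; in particular, if the mesh
tends to `0` and the extreme strikes tend to the support bounds, then `𝒲₁(μⁿ,μ) → 0`. -/
theorem finite_strikes_stability (μ : Measure ℝ)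
    (hμ : IsProbabilityMeasure μ) (hmom : Integrable (fun x : ℝ => x) μ)
    (m : ℕ → ℕ) (K : ∀ n, Fin (m n + 1) → ℝ)
    (hK : ∀ n, StrictMono (K n))
    (hlow : ∀ n, suppInf μ < ((K n 0 : ℝ) : EReal))
    (hhigh : ∀ n, ((K n (Fin.last (m n)) : ℝ) : EReal) < suppSup μ)
    (μn : ℕ → Measure ℝ)
    (hμn : ∀ n, IsProbabilityMeasure (μn n))
    (hmomn : ∀ n, Integrable (fun x : ℝ => x) (μn n))
    (hmean : ∀ n, ∫ x, x ∂(μn n) = ∫ x, x ∂μ)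
    (hcall : ∀ n i, callPrice (μn n) (K n i) = callPrice μ (K n i)) :
    (∀ n, (1 / 2) * W1R (μn n) μ ≤
      (⨆ i : Fin (m n), (K n i.succ - K n i.castSucc)) + K n 0 - (∫ x, x ∂μ)
        + callPrice μ (K n 0) + callPrice μ (K n (Fin.last (m n)))) ∧
    (Tendsto (fun n => ⨆ i : Fin (m n), (K n i.succ - K n i.castSucc)) atTop (nhds 0) →
      Tendsto (fun n => ((K n 0 : ℝ) : EReal)) atTop (nhds (suppInf μ)) →
      Tendsto (fun n => ((K n (Fin.last (m n)) : ℝ) : EReal)) atTop (nhds (suppSup μ)) →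
      Tendsto (fun n => W1R (μn n) μ) atTop (nhds 0)) :=
  finite_strikes_stability_general μ hμ hmom m K hK μn hμn hmomn hmean hcall

end MMOT
end

section
/- Let μ ∈ 𝒫(ℝ) and n ∈ ℕ, and let μⁿ be the discretisation of μ supported on the grid {k/n : k ∈ ℤ} defined by μⁿ({k/n}) := ∫_{[(k−1)/n,(k+1)/n)} (1 − |nx − k|) μ(dx). Then μⁿ is a probability measure and 𝒲₁(μⁿ, μ) ≤ 1/n. Moreover, for every measurable f : ℝ → ℝ (integrable as needed), ∫ f dμⁿ = ∫ f_n dμ, where f_n(x) := (1 + ⌊nx⌋ − nx) f(⌊nx⌋/n) + (nx − ⌊nx⌋) f((1 + ⌊nx⌋)/n). -/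
/-!
The tents `x ↦ 1 - |n x - k|` on the cells `[(k-1)/n, (k+1)/n)` form a partition of unity on `ℝ`:
`x` lies exactly in the cells `k = ⌊n x⌋` and `k = ⌊n x⌋ + 1`, where the two tents are
`1 + ⌊n x⌋ - n x` and `n x - ⌊n x⌋`. Splitting `μ` along this partition gives pieces of mass
`μⁿ{k/n}`; moving the `k`-th piece to `k/n` is a coupling of `μⁿ` and `μ` that displaces mass by at
most `1/n`, and integrating `f` against the same splitting gives
`∫ f dμⁿ = ∑ₖ μⁿ{k/n} f(k/n) = ∫ f_n dμ`.
-/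

open MeasureTheory Filter

namespace MMOT

/-- Weight of the discretisation of `μ` at the grid point `k/n`:
`∫_{[(k−1)/n,(k+1)/n)} (1 − |nx − k|) μ(dx)`. -/
noncomputable def gridWeight (μ : Measure ℝ) (n : ℕ) (k : ℤ) : ℝ :=
  ∫ x in Set.Ico (((k : ℝ) - 1) / n) (((k : ℝ) + 1) / n), (1 - |(n : ℝ) * x - (k : ℝ)|) ∂μ

/-- The grid discretisation `μⁿ` of `μ`, supported on `{k/n : k ∈ ℤ}`. -/
noncomputable def gridDisc (μ : Measure ℝ) (n : ℕ) : Measure ℝ :=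
  Measure.sum fun k : ℤ => ENNReal.ofReal (gridWeight μ n k) • Measure.dirac ((k : ℝ) / n)

/-- The piecewise-linear interpolation `f_n` of `f` along the grid `{k/n}`. -/
noncomputable def interp (f : ℝ → ℝ) (n : ℕ) (x : ℝ) : ℝ :=
  (1 + (⌊(n : ℝ) * x⌋ : ℝ) - (n : ℝ) * x) * f ((⌊(n : ℝ) * x⌋ : ℝ) / n) +
    ((n : ℝ) * x - (⌊(n : ℝ) * x⌋ : ℝ)) * f ((1 + (⌊(n : ℝ) * x⌋ : ℝ)) / n)

open scoped ENNReal

def gridCell (n : ℕ) (k : ℤ) : Set ℝ := Set.Ico (((k : ℝ) - 1) / n) (((k : ℝ) + 1) / n)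

noncomputable def gridTent (n : ℕ) (k : ℤ) (x : ℝ) : ℝ := 1 - |(n : ℝ) * x - k|

noncomputable def gridPiece (μ : Measure ℝ) (n : ℕ) (k : ℤ) : Measure ℝ :=
  μ.withDensity ((gridCell n k).indicator fun x => ENNReal.ofReal (gridTent n k x))

/-- The coupling of `gridDisc μ n` (first coordinate) with `μ` (second coordinate) that sends
mass at `x` to the two neighbouring grid points, in the proportions given by the tents. -/
noncomputable def gridCoupling (μ : Measure ℝ) (n : ℕ) : Measure (ℝ × ℝ) :=
  Measure.sum fun k : ℤ => (gridPiece μ n k).map fun x => ((k : ℝ) / n, x)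

lemma continuous_gridTent (n : ℕ) (k : ℤ) : Continuous (gridTent n k) := by
  unfold gridTent; fun_prop

lemma measurableSet_gridCell (n : ℕ) (k : ℤ) : MeasurableSet (gridCell n k) := measurableSet_Ico

lemma gridWeight_eq_setIntegral_gridTent (μ : Measure ℝ) (n : ℕ) (k : ℤ) :
    gridWeight μ n k = ∫ x in gridCell n k, gridTent n k x ∂μ := rfl

lemma gridTent_floor (n : ℕ) (x : ℝ) :
    gridTent n ⌊(n : ℝ) * x⌋ x = 1 + ⌊(n : ℝ) * x⌋ - n * x := by
  rw [gridTent, abs_of_nonneg (sub_nonneg.2 (Int.floor_le _))]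
  ring

lemma gridTent_floor_add_one (n : ℕ) (x : ℝ) :
    gridTent n (⌊(n : ℝ) * x⌋ + 1) x = n * x - ⌊(n : ℝ) * x⌋ := by
  rw [gridTent, Int.cast_add, Int.cast_one,
    abs_of_nonpos (sub_nonpos.2 (Int.lt_floor_add_one _).le)]
  ring

section Cells

variable {n : ℕ} (hn : 0 < n)
include hn

lemma mem_gridCell_iff {x : ℝ} {k : ℤ} :
    x ∈ gridCell n k ↔ k = ⌊(n : ℝ) * x⌋ ∨ k = ⌊(n : ℝ) * x⌋ + 1 := by
  have hN : (0 : ℝ) < n := by exact_mod_cast hn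
  have hlo : k - 1 ≤ ⌊(n : ℝ) * x⌋ ↔ (k : ℝ) - 1 ≤ n * x := by
    rw [Int.le_floor]; push_cast; rfl
  have hhi : ⌊(n : ℝ) * x⌋ < k + 1 ↔ n * x < (k : ℝ) + 1 := by
    rw [Int.floor_lt]; push_cast; rfl
  rw [gridCell, Set.mem_Ico, div_le_iff₀ hN, lt_div_iff₀ hN, mul_comm x, ← hlo, ← hhi]
  omega

lemma abs_mul_sub_le_one_of_mem_gridCell {x : ℝ} {k : ℤ} (hx : x ∈ gridCell n k) :
    |(n : ℝ) * x - k| ≤ 1 := by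
  have hN : (0 : ℝ) < n := by exact_mod_cast hn
  obtain ⟨hlo, hhi⟩ := hx
  rw [div_le_iff₀ hN] at hlo
  rw [lt_div_iff₀ hN] at hhi
  rw [abs_le]
  constructor <;> linarith

lemma gridTent_nonneg_of_mem_gridCell {x : ℝ} {k : ℤ} (hx : x ∈ gridCell n k) :
    0 ≤ gridTent n k x :=
  sub_nonneg.2 (abs_mul_sub_le_one_of_mem_gridCell hn hx)

lemma abs_sub_le_of_mem_gridCell {x : ℝ} {k : ℤ} (hx : x ∈ gridCell n k) :
    |(k : ℝ) / n - x| ≤ 1 / n := by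
  have hN : (0 : ℝ) < n := by exact_mod_cast hn
  rw [show (k : ℝ) / n - x = -((n * x - k) / n) by field_simp; ring, abs_neg, abs_div,
    abs_of_pos hN]
  exact div_le_div_of_nonneg_right (abs_mul_sub_le_one_of_mem_gridCell hn hx) hN.le

lemma tsum_eq_of_eq_zero_off_gridCell {M : Type*} [AddCommMonoid M] [TopologicalSpace M]
    [T2Space M] {x : ℝ} (G : ℤ → M) (hG : ∀ k, x ∉ gridCell n k → G k = 0) :
    ∑' k, G k = G ⌊(n : ℝ) * x⌋ + G (⌊(n : ℝ) * x⌋ + 1) := by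
  rw [tsum_eq_sum (s := {⌊(n : ℝ) * x⌋, ⌊(n : ℝ) * x⌋ + 1}), Finset.sum_pair (by omega)]
  intro k hk
  refine hG k fun hx => hk ?_
  rw [mem_gridCell_iff hn] at hx
  simpa using hx

lemma tsum_indicator_gridTent (x : ℝ) :
    ∑' k, (gridCell n k).indicator (fun y => ENNReal.ofReal (gridTent n k y)) x = 1 := by
  rw [tsum_eq_of_eq_zero_off_gridCell hn _ fun k hx => Set.indicator_of_notMem hx _,
    Set.indicator_of_mem ((mem_gridCell_iff hn).2 (Or.inl rfl)),
    Set.indicator_of_mem ((mem_gridCell_iff hn).2 (Or.inr rfl)),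
    gridTent_floor, gridTent_floor_add_one, ← ENNReal.ofReal_add]
  · convert ENNReal.ofReal_one using 2; ring
  · linarith [Int.lt_floor_add_one ((n : ℝ) * x)]
  · linarith [Int.floor_le ((n : ℝ) * x)]

lemma interp_eq_tsum (f : ℝ → ℝ) (x : ℝ) :
    interp f n x = ∑' k : ℤ, (gridCell n k).indicator (gridTent n k) x * f (k / n) := by
  rw [tsum_eq_of_eq_zero_off_gridCell hn _ fun k hx => by rw [Set.indicator_of_notMem hx,
      zero_mul],
    Set.indicator_of_mem ((mem_gridCell_iff hn).2 (Or.inl rfl)),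
    Set.indicator_of_mem ((mem_gridCell_iff hn).2 (Or.inr rfl)),
    gridTent_floor, gridTent_floor_add_one, interp, Int.cast_add, Int.cast_one,
    add_comm _ (1 : ℝ)]

end Cells

section Coupling

variable (μ : Measure ℝ) {n : ℕ} (hn : 0 < n)
include hn

lemma gridWeight_nonneg (k : ℤ) : 0 ≤ gridWeight μ n k :=
  setIntegral_nonneg (measurableSet_gridCell n k) fun _ hx =>
    gridTent_nonneg_of_mem_gridCell hn hx

lemma setLIntegral_gridTent [IsLocallyFiniteMeasure μ] (k : ℤ) :
    ∫⁻ x in gridCell n k, ENNReal.ofReal (gridTent n k x) ∂μ =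
      ENNReal.ofReal (gridWeight μ n k) := by
  have hint : IntegrableOn (gridTent n k) (gridCell n k) μ :=
    (continuous_gridTent n k).integrableOn_Icc.mono_set
      Set.Ico_subset_Icc_self
  rw [gridWeight_eq_setIntegral_gridTent, ofReal_integral_eq_lintegral_ofReal hint]
  exact (ae_restrict_iff' (measurableSet_gridCell n k)).2
    (Eventually.of_forall fun _ hx => gridTent_nonneg_of_mem_gridCell hn hx)

lemma gridPiece_univ [IsLocallyFiniteMeasure μ] (k : ℤ) :
    gridPiece μ n k Set.univ = ENNReal.ofReal (gridWeight μ n k) := by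
  rw [gridPiece, withDensity_apply _ MeasurableSet.univ, Measure.restrict_univ,
    lintegral_indicator (measurableSet_gridCell n k), setLIntegral_gridTent μ hn]

lemma sum_gridPiece : Measure.sum (gridPiece μ n) = μ := by
  have hmeas :
      ∀ k, Measurable ((gridCell n k).indicator fun x => ENNReal.ofReal (gridTent n k x)) :=
    fun k => (continuous_gridTent n k).measurable.ennreal_ofReal.indicator
      (measurableSet_gridCell n k)
  have hunity : ∑' k, (gridCell n k).indicator (fun x => ENNReal.ofReal (gridTent n k x)) = 1 :=
    funext fun x => by rw [ENNReal.tsum_apply, tsum_indicator_gridTent hn, Pi.one_apply]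
  unfold gridPiece
  rw [← withDensity_tsum hmeas, hunity, withDensity_one]

lemma map_snd_gridCoupling : (gridCoupling μ n).map Prod.snd = μ := by
  rw [gridCoupling, Measure.map_sum measurable_snd.aemeasurable]
  conv_rhs => rw [← sum_gridPiece μ hn]
  congr 1
  funext k
  rw [Measure.map_map measurable_snd measurable_prodMk_left]
  exact Measure.map_id

lemma map_fst_gridCoupling [IsLocallyFiniteMeasure μ] :
    (gridCoupling μ n).map Prod.fst = gridDisc μ n := by
  rw [gridCoupling, Measure.map_sum measurable_fst.aemeasurable, gridDisc]
  congr 1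
  funext k
  rw [Measure.map_map measurable_fst measurable_prodMk_left, Function.comp_def,
    Measure.map_const, gridPiece_univ μ hn]

lemma ae_abs_sub_le_gridCoupling : ∀ᵐ p ∂gridCoupling μ n, |p.1 - p.2| ≤ 1 / (n : ℝ) := by
  have hms : MeasurableSet {p : ℝ × ℝ | |p.1 - p.2| ≤ 1 / (n : ℝ)} :=
    measurableSet_le (by fun_prop) (by fun_prop)
  rw [gridCoupling, Measure.ae_sum_iff' hms]
  intro k
  rw [ae_map_iff measurable_prodMk_left.aemeasurable hms, gridPiece,
    withDensity_indicator (measurableSet_gridCell n k)]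
  refine (withDensity_absolutelyContinuous _ _).ae_le ?_
  filter_upwards [ae_restrict_mem (measurableSet_gridCell n k)] with x hx
  exact abs_sub_le_of_mem_gridCell hn hx

end Coupling

lemma W1R_le_of_ae_abs_sub_le {μ ν : Measure ℝ} {γ : Measure (ℝ × ℝ)} [IsProbabilityMeasure γ]
    {c : ℝ} (h₁ : γ.map Prod.fst = μ) (h₂ : γ.map Prod.snd = ν)
    (hc : ∀ᵐ p ∂γ, |p.1 - p.2| ≤ c) : W1R μ ν ≤ c := by
  have hint : Integrable (fun p : ℝ × ℝ => |p.1 - p.2|) γ :=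
    (integrable_const c).mono' (by fun_prop) (by simpa only [Real.norm_eq_abs, abs_abs] using hc)
  refine csInf_le_of_le ⟨0, ?_⟩ ⟨γ, inferInstance, h₁, h₂, hint, rfl⟩ ?_
  · rintro r ⟨γ', -, -, -, -, rfl⟩
    exact integral_nonneg fun p => abs_nonneg _
  · calc ∫ p, |p.1 - p.2| ∂γ ≤ ∫ _, c ∂γ := integral_mono_ae hint (integrable_const c) hc
      _ = c := by simp

lemma lintegral_gridDisc (μ : Measure ℝ) (n : ℕ) (g : ℝ → ℝ≥0∞) :
    ∫⁻ x, g x ∂gridDisc μ n = ∑' k : ℤ, ENNReal.ofReal (gridWeight μ n k) * g (k / n) := by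
  simp only [gridDisc, lintegral_sum_measure, lintegral_smul_measure, lintegral_dirac, smul_eq_mul]

section Integrals

variable {μ : Measure ℝ} {n : ℕ} (hn : 0 < n) {f : ℝ → ℝ}
include hn

lemma integral_gridDisc (hf : Integrable f (gridDisc μ n)) :
    ∫ x, f x ∂gridDisc μ n = ∑' k : ℤ, gridWeight μ n k * f (k / n) := by
  rw [gridDisc, integral_sum_measure hf]
  refine tsum_congr fun k => ?_
  rw [integral_smul_measure, integral_dirac, ENNReal.toReal_ofReal (gridWeight_nonneg μ hn k),
    smul_eq_mul]

lemma lintegral_enorm_indicator_gridTent_mul [IsLocallyFiniteMeasure μ] (k : ℤ) (c : ℝ) :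
    ∫⁻ x, ‖(gridCell n k).indicator (gridTent n k) x * c‖ₑ ∂μ =
      ENNReal.ofReal (gridWeight μ n k) * ‖c‖ₑ := by
  simp_rw [enorm_mul, enorm_indicator_eq_indicator_enorm]
  rw [lintegral_mul_const' _ _ enorm_ne_top, lintegral_indicator (measurableSet_gridCell n k),
    ← setLIntegral_gridTent μ hn]
  refine congrArg (· * ‖c‖ₑ) (setLIntegral_congr_fun (measurableSet_gridCell n k) fun x hx => ?_)
  rw [Real.enorm_eq_ofReal (gridTent_nonneg_of_mem_gridCell hn hx)]

lemma integral_interp [IsLocallyFiniteMeasure μ] (hf : Integrable f (gridDisc μ n)) :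
    ∫ x, interp f n x ∂μ = ∑' k : ℤ, gridWeight μ n k * f (k / n) := by
  have hmeas : ∀ k : ℤ, AEStronglyMeasurable
      (fun x => (gridCell n k).indicator (gridTent n k) x * f (k / n)) μ := fun k =>
    (((continuous_gridTent n k).measurable.indicator
      (measurableSet_gridCell n k)).mul_const _).aestronglyMeasurable
  have hfin : ∑' k : ℤ, ∫⁻ x, ‖(gridCell n k).indicator (gridTent n k) x * f (k / n)‖ₑ ∂μ ≠ ⊤ := by
    rw [tsum_congr fun k => lintegral_enorm_indicator_gridTent_mul hn k _,
      ← lintegral_gridDisc μ n fun x => ‖f x‖ₑ]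
    exact hf.2.ne
  simp_rw [interp_eq_tsum hn, integral_tsum hmeas hfin, integral_mul_const,
    integral_indicator (measurableSet_gridCell _ _), ← gridWeight_eq_setIntegral_gridTent]

end Integrals

theorem gridDisc_properties_general (μ : Measure ℝ) (hμ : IsProbabilityMeasure μ)
    (n : ℕ) (hn : 0 < n) :
    IsProbabilityMeasure (gridDisc μ n) ∧
    W1R (gridDisc μ n) μ ≤ 1 / n ∧
    ∀ f : ℝ → ℝ, Measurable f → Integrable f (gridDisc μ n) → Integrable (interp f n) μ →
      ∫ x, f x ∂(gridDisc μ n) = ∫ x, interp f n x ∂μ := by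
  have hγ : IsProbabilityMeasure (gridCoupling μ n) := by
    rwa [← Measure.isProbabilityMeasure_map_iff measurable_snd.aemeasurable,
      map_snd_gridCoupling μ hn]
  refine ⟨?_, W1R_le_of_ae_abs_sub_le (map_fst_gridCoupling μ hn) (map_snd_gridCoupling μ hn)
    (ae_abs_sub_le_gridCoupling μ hn), fun f _ hf _ => ?_⟩
  · rw [← map_fst_gridCoupling μ hn]
    exact (Measure.isProbabilityMeasure_map_iff measurable_fst.aemeasurable).2 hγ
  · rw [integral_gridDisc hn hf, integral_interp hn hf]

/-- the grid discretisation `μⁿ` is a probability measure with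
`𝒲₁(μⁿ, μ) ≤ 1/n`, and `∫ f dμⁿ = ∫ f_n dμ` for every measurable (suitably integrable) `f`. -/
theorem gridDisc_properties (μ : Measure ℝ) (hμ : IsProbabilityMeasure μ)
    (hmom : Integrable (fun x : ℝ => x) μ) (n : ℕ) (hn : 0 < n) :
    IsProbabilityMeasure (gridDisc μ n) ∧
    W1R (gridDisc μ n) μ ≤ 1 / n ∧
    ∀ f : ℝ → ℝ, Measurable f → Integrable f (gridDisc μ n) → Integrable (interp f n) μ →
      ∫ x, f x ∂(gridDisc μ n) = ∫ x, interp f n x ∂μ :=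
  gridDisc_properties_general μ hμ n hn

end MMOT
end

section
/- Let μ ∈ 𝒫(ℝ), n ∈ ℕ, and k ∈ ℤ. Then ∫_{[(k−1)/n,(k+1)/n)} (1 − |nx − k|) μ(dx) = n ( C_μ((k−1)/n) + C_μ((k+1)/n) − 2 C_μ(k/n) ), where C_μ(K) := ∫_ℝ (x − K)⁺ μ(dx). In particular, the grid discretisation μⁿ({k/n}) := ∫_{[(k−1)/n,(k+1)/n)} (1 − |nx − k|) μ(dx) is determined by the call prices of μ at the grid points. -/
open MeasureTheory Filter

namespace MMOT

/-- the discretisation weights are determined by call prices: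
`μⁿ({k/n}) = n (C_μ((k−1)/n) + C_μ((k+1)/n) − 2C_μ(k/n))`. -/
theorem gridWeight_eq_callPrices (μ : Measure ℝ) (hμ : IsProbabilityMeasure μ)
    (hmom : Integrable (fun x : ℝ => x) μ) (n : ℕ) (hn : 0 < n) (k : ℤ) :
    gridWeight μ n k =
      n * (callPrice μ (((k : ℝ) - 1) / n) + callPrice μ (((k : ℝ) + 1) / n)
        - 2 * callPrice μ ((k : ℝ) / n)) := by
  have hn' : (0 : ℝ) < n := by exact_mod_cast hn
  have hn0 : (n : ℝ) ≠ 0 := ne_of_gt hn'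
  set a : ℝ := ((k : ℝ) - 1) / n with ha
  set b : ℝ := ((k : ℝ) + 1) / n with hb
  set m : ℝ := (k : ℝ) / n with hm
  have hint : ∀ K : ℝ, Integrable (fun x => max (x - K) 0) μ := by
    intro K
    refine Integrable.mono' (hmom.sub (integrable_const K)).abs
      ((continuous_id.sub continuous_const).max continuous_const).aestronglyMeasurable ?_
    filter_upwards with x
    rw [Real.norm_eq_abs, abs_of_nonneg (le_max_right _ _)]
    exact max_le (le_abs_self _) (abs_nonneg _)
  have key : ∀ x ∈ Set.Ico a b, (1 - |(n : ℝ) * x - (k : ℝ)|) =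
      n * (max (x - a) 0 + max (x - b) 0 - 2 * max (x - m) 0) := by
    rintro x ⟨h1, h2⟩
    have hxb : max (x - b) 0 = 0 := max_eq_right (sub_nonpos.2 h2.le)
    have hxa : max (x - a) 0 = x - a := max_eq_left (sub_nonneg.2 h1)
    rcases le_total x m with h | h
    · have hnx : (n : ℝ) * x ≤ k := by
        rw [hm, le_div_iff₀ hn'] at h; linarith
      rw [abs_of_nonpos (by linarith), hxa, hxb, max_eq_right (sub_nonpos.2 h), ha]
      field_simp
      ring
    · have hnx : (k : ℝ) ≤ n * x := by
        rw [hm, div_le_iff₀ hn'] at h; linarith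
      rw [abs_of_nonneg (by linarith), hxa, hxb, max_eq_left (sub_nonneg.2 h), ha, hm]
      field_simp
      ring
  have hzero : ∀ x ∉ Set.Ico a b,
      (n : ℝ) * (max (x - a) 0 + max (x - b) 0 - 2 * max (x - m) 0) = 0 := by
    intro x hx
    rw [Set.mem_Ico, not_and_or, not_le, not_lt] at hx
    rcases hx with h | h
    · have hm' : x ≤ m := h.le.trans (by rw [ha, hm]; gcongr; linarith)
      have hb' : x ≤ b := h.le.trans (by rw [ha, hb]; gcongr; linarith)
      rw [max_eq_right (sub_nonpos.2 h.le), max_eq_right (sub_nonpos.2 hb'),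
        max_eq_right (sub_nonpos.2 hm')]
      ring
    · have ha' : a ≤ x := le_trans (by rw [ha, hb]; gcongr <;> linarith) h
      have hm' : m ≤ x := le_trans (by rw [hm, hb]; gcongr <;> linarith) h
      rw [max_eq_left (sub_nonneg.2 ha'), max_eq_left (sub_nonneg.2 h),
        max_eq_left (sub_nonneg.2 hm'), ha, hb, hm]
      field_simp
      ring
  unfold gridWeight callPrice
  rw [setIntegral_congr_fun measurableSet_Ico key,
    setIntegral_eq_integral_of_forall_compl_eq_zero hzero, integral_const_mul]
  congr 1
  have hadd : ∫ x, (max (x - a) 0 + max (x - b) 0) ∂μ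
      = (∫ x, max (x - a) 0 ∂μ) + ∫ x, max (x - b) 0 ∂μ := integral_add (hint a) (hint b)
  have hsub : ∫ x, (max (x - a) 0 + max (x - b) 0 - 2 * max (x - m) 0) ∂μ
      = (∫ x, (max (x - a) 0 + max (x - b) 0) ∂μ) - ∫ x, 2 * max (x - m) 0 ∂μ :=
    integral_sub ((hint a).add (hint b)) ((hint m).const_mul 2)
  rw [hsub, hadd, integral_const_mul]

end MMOT
end

section
/- Let d ∈ ℕ and let c(x) = Σ_{1≤i<j≤d} c_{ij} x_i x_j with c_{ij} ≥ 0 inducing a connected graph on {1,…,d} (i and j adjacent iff c_{ij} > 0). Fix positive constants a_1,…,a_d, set λ_{ij} = √(c_{ij} a_j / a_i), σ_{ij} = √(c_{ij} a_i / a_j), g_{ij}(x) = (1/2)(λ_{ij} x_i − σ_{ij} x_j)², and G(x) = Σ_{i<j} g_{ij}(x). For x₀ ∈ ℝ^d let H_{x₀}(x) = G(x₀) + ∇G(x₀)·(x − x₀) be the affine tangent of G at x₀. Then { x ∈ ℝ^d : G(x) = H_{x₀}(x) } = x₀ + L, where L is the one-dimensional subspace of ℝ^d spanned by a = (a_1,…,a_d).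 -/
/-!
`G` is a quadratic form, `½ Σ ℓ_{ij}²` with `ℓ_{ij}(x) = λ_{ij} x_i − σ_{ij} x_j`, so
`G x − G x₀ − DG(x₀)(x − x₀) = G (x − x₀)` and the contact set is `x₀ + ker G`, where
`ker G = ⋂ ker ℓ_{ij}`. Since `ℓ_{ij}(h) = √(c_{ij}/(a_i a_j)) (a_j h_i − a_i h_j)`, every `ℓ_{ij}`
vanishes at `a`, and for an edge `c_{ij} > 0` it vanishes at `h` iff `h_i / a_i = h_j / a_j`; by
connectedness `h / a` is then constant.
-/

open Filter

namespace MMOT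

/-- `G(x) = Σ_{i<j} (1/2)(λ_{ij} x_i − σ_{ij} x_j)²` with
`λ_{ij} = √(c_{ij} a_j / a_i)` and `σ_{ij} = √(c_{ij} a_i / a_j)`. -/
noncomputable def Gfun {d : ℕ} (c : Fin d → Fin d → ℝ) (a : Fin d → ℝ)
    (x : Fin d → ℝ) : ℝ :=
  ∑ i, ∑ j, if i < j then
    (1 / 2) * (Real.sqrt (c i j * a j / a i) * x i
      - Real.sqrt (c i j * a i / a j) * x j) ^ 2
  else 0

/-- Adjacency relation of the graph induced by the coefficients `c_{ij}`, `i < j`. -/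
def AdjRel {d : ℕ} (c : Fin d → Fin d → ℝ) (i j : Fin d) : Prop :=
  (i < j ∧ 0 < c i j) ∨ (j < i ∧ 0 < c j i)

section HalfSumSq

variable {ι E : Type*} [Fintype ι] [NormedAddCommGroup E] [NormedSpace ℝ E]

noncomputable def halfSumSq (ℓ : ι → E →L[ℝ] ℝ) (x : E) : ℝ :=
  ∑ k, (1 / 2) * (ℓ k x) ^ 2

theorem hasFDerivAt_halfSumSq (ℓ : ι → E →L[ℝ] ℝ) (x₀ : E) :
    HasFDerivAt (halfSumSq ℓ) (∑ k, ℓ k x₀ • ℓ k) x₀ := by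
  refine HasFDerivAt.fun_sum fun k _ => ?_
  refine (((ℓ k).hasFDerivAt.pow 2).const_mul (1 / 2)).congr_fderiv ?_
  ext y
  simp only [FunLike.coe_smul, Pi.smul_apply, Nat.add_one_sub_one, pow_one, nsmul_eq_mul,
    Nat.cast_ofNat, smul_eq_mul]
  ring

theorem halfSumSq_eq_add_fderiv_add (ℓ : ι → E →L[ℝ] ℝ) (x₀ x : E) :
    halfSumSq ℓ x
      = halfSumSq ℓ x₀ + fderiv ℝ (halfSumSq ℓ) x₀ (x - x₀) + halfSumSq ℓ (x - x₀) := by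
  simp only [(hasFDerivAt_halfSumSq ℓ x₀).fderiv, halfSumSq, FunLike.coe_sum, Finset.sum_apply,
    FunLike.coe_smul, Pi.smul_apply, smul_eq_mul, ← Finset.sum_add_distrib]
  refine Finset.sum_congr rfl fun k _ => ?_
  rw [map_sub]
  ring

theorem halfSumSq_eq_zero_iff (ℓ : ι → E →L[ℝ] ℝ) (h : E) :
    halfSumSq ℓ h = 0 ↔ ∀ k, ℓ k h = 0 := by
  rw [halfSumSq, Finset.sum_eq_zero_iff_of_nonneg fun k _ => by positivity]
  simp

theorem halfSumSq_eq_tangent_iff (ℓ : ι → E →L[ℝ] ℝ) (x₀ x : E) :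
    halfSumSq ℓ x = halfSumSq ℓ x₀ + fderiv ℝ (halfSumSq ℓ) x₀ (x - x₀) ↔
      ∀ k, ℓ k (x - x₀) = 0 := by
  rw [← halfSumSq_eq_zero_iff, halfSumSq_eq_add_fderiv_add ℓ x₀ x, add_eq_left]

end HalfSumSq

section EdgeForm

variable {d : ℕ} (c : Fin d → Fin d → ℝ) (a : Fin d → ℝ)

noncomputable def edgeForm (i j : Fin d) : (Fin d → ℝ) →L[ℝ] ℝ :=
  Real.sqrt (c i j * a j / a i) • ContinuousLinearMap.proj i
    - Real.sqrt (c i j * a i / a j) • ContinuousLinearMap.proj j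

theorem edgeForm_apply (i j : Fin d) (x : Fin d → ℝ) :
    edgeForm c a i j x
      = Real.sqrt (c i j * a j / a i) * x i - Real.sqrt (c i j * a i / a j) * x j := by
  simp [edgeForm]

noncomputable def edgeForms (p : Fin d × Fin d) : (Fin d → ℝ) →L[ℝ] ℝ :=
  if p.1 < p.2 then edgeForm c a p.1 p.2 else 0

theorem Gfun_eq_halfSumSq : Gfun c a = halfSumSq (edgeForms c a) := by
  ext x
  rw [Gfun, halfSumSq, Fintype.sum_prod_type]
  refine Finset.sum_congr rfl fun i _ => Finset.sum_congr rfl fun j _ => ?_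
  by_cases hij : i < j <;> simp [edgeForms, edgeForm_apply, hij]

variable {c a}

theorem edgeForm_apply_eq_mul_sub {i j : Fin d} (hai : 0 < a i) (haj : 0 < a j)
    (h : Fin d → ℝ) :
    edgeForm c a i j h = Real.sqrt (c i j / (a i * a j)) * (a j * h i - a i * h j) := by
  have hsqrt {u v : ℝ} (hv : 0 < v) :
      Real.sqrt (c i j * v / u) = Real.sqrt (c i j / (u * v)) * v := by
    rw [← Real.sqrt_sq hv.le, ← Real.sqrt_mul' _ (sq_nonneg v), Real.sqrt_sq hv.le]
    congr 1
    field_simp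
  rw [edgeForm_apply, hsqrt haj, hsqrt hai, mul_comm (a j) (a i)]
  ring

theorem edgeForm_apply_self {i j : Fin d} (hai : 0 < a i) (haj : 0 < a j) :
    edgeForm c a i j a = 0 := by
  rw [edgeForm_apply_eq_mul_sub hai haj, mul_comm (a j), sub_self, mul_zero]

theorem edgeForm_eq_zero_iff {i j : Fin d} (hc : 0 < c i j) (hai : 0 < a i) (haj : 0 < a j)
    (h : Fin d → ℝ) : edgeForm c a i j h = 0 ↔ h i / a i = h j / a j := by
  have hsqrt : 0 < Real.sqrt (c i j / (a i * a j)) := by positivity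
  rw [edgeForm_apply_eq_mul_sub hai haj, mul_eq_zero, or_iff_right hsqrt.ne',
    div_eq_div_iff hai.ne' haj.ne', sub_eq_zero, mul_comm (a j), mul_comm (a i)]

theorem eq_of_reflTransGen {α β : Type*} {r : α → α → Prop} {f : α → β}
    (hf : ∀ x y, r x y → f x = f y) {x y : α} (h : Relation.ReflTransGen r x y) : f x = f y := by
  simpa only [Relation.reflTransGen_eq_self] using h.lift f hf

theorem forall_edgeForms_eq_zero_iff (ha : ∀ i, 0 < a i)
    (hconn : ∀ i j : Fin d, Relation.ReflTransGen (AdjRel c) i j) (h : Fin d → ℝ) :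
    (∀ p, edgeForms c a p h = 0) ↔ ∃ s : ℝ, h = s • a := by
  constructor
  · intro hh
    have hedge : ∀ i j, AdjRel c i j → h i / a i = h j / a j := by
      rintro i j (⟨hij, hc⟩ | ⟨hji, hc⟩)
      · exact (edgeForm_eq_zero_iff hc (ha i) (ha j) h).1
          (by simpa [edgeForms, hij] using hh (i, j))
      · exact ((edgeForm_eq_zero_iff hc (ha j) (ha i) h).1
          (by simpa [edgeForms, hji] using hh (j, i))).symm
    rcases isEmpty_or_nonempty (Fin d) with _ | ⟨⟨i₀⟩⟩
    · exact ⟨0, Subsingleton.elim _ _⟩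
    · refine ⟨h i₀ / a i₀, funext fun j => ?_⟩
      rw [Pi.smul_apply, smul_eq_mul, ← eq_of_reflTransGen hedge (hconn j i₀),
        div_mul_cancel₀ _ (ha j).ne']
  · rintro ⟨s, rfl⟩ ⟨i, j⟩
    by_cases hij : i < j <;> simp [edgeForms, hij, edgeForm_apply_self (ha i) (ha j)]

end EdgeForm

theorem tangent_contact_set_general {d : ℕ} (c : Fin d → Fin d → ℝ) (a : Fin d → ℝ)
    (ha : ∀ i, 0 < a i)
    (hconn : ∀ i j : Fin d, Relation.ReflTransGen (AdjRel c) i j)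
    (x₀ : Fin d → ℝ) :
    {x : Fin d → ℝ | Gfun c a x = Gfun c a x₀ + fderiv ℝ (Gfun c a) x₀ (x - x₀)}
      = {x : Fin d → ℝ | ∃ s : ℝ, x = x₀ + s • a} := by
  ext x
  rw [Set.mem_ofPred_eq, Set.mem_ofPred_eq, Gfun_eq_halfSumSq, halfSumSq_eq_tangent_iff,
    forall_edgeForms_eq_zero_iff ha hconn]
  simp only [sub_eq_iff_eq_add']

/-- Lemma: contact set of the tangent of `G`.
If the nonnegative coefficients `c_{ij}` induce a connected graph on `{1,…,d}` and
`a_1,…,a_d > 0`, then the set where `G` coincides with its affine tangent at `x₀` is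
exactly the line `x₀ + L`, where `L = span{a}`. -/
theorem tangent_contact_set {d : ℕ} (c : Fin d → Fin d → ℝ) (a : Fin d → ℝ)
    (hc : ∀ i j, i < j → 0 ≤ c i j) (ha : ∀ i, 0 < a i)
    (hconn : ∀ i j : Fin d, Relation.ReflTransGen (AdjRel c) i j)
    (x₀ : Fin d → ℝ) :
    {x : Fin d → ℝ | Gfun c a x = Gfun c a x₀ + fderiv ℝ (Gfun c a) x₀ (x - x₀)}
      = {x : Fin d → ℝ | ∃ s : ℝ, x = x₀ + s • a} :=
  tangent_contact_set_general c a ha hconn x₀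

end MMOT
end

section
/- Let T = 2 and consider martingale couplings of (X, Y) ∈ ℝ^d × ℝ^d with one-dimensional marginals X_i ∼ μ_i, Y_i ∼ ν_i having finite second moments. Let c(Y) = Σ_{1≤i<j≤d} c_{ij} Y_i Y_j with c_{ij} ≥ 0 inducing a connected graph on {1,…,d}, and suppose the marginals (μ_i, ν_i)_{1≤i≤d} satisfy LIM with positive constants a = (a_1,…,a_d) and non-Dirac centered measure κ. Let L be the one-dimensional subspace of ℝ^d spanned by a. Then every maximizer π of the MMOT problem sup_{π ∈ ℳ(μ,ν)} ∫ c dπ, when disintegrated as π(dx,dy) = π_x(dy) π¹(dx) over its first marginal π¹ = π∘X^{-1}, satisfies: (1) supp π_x ⊆ L + x for π¹-almost every x; and (2) π¹ is an optimal transport plan in Π(μ_1,…,μ_d) for the maximization problem with cost c(X) = Σ_{1≤i<j≤d} c_{ij} X_i X_j. -/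
open MeasureTheory Filter

namespace MMOT

/-- `ℝ^d`. -/
abbrev Vec (d : ℕ) := Fin d → ℝ

/-- The set `ℳ(μ,ν)` of martingale couplings: laws of `(X,Y)` with `X_i ∼ μ_i`, `Y_i ∼ ν_i`
and `E[Y|X] = X`. -/
def PairMartSet {d : ℕ} (μ ν : Fin d → Measure ℝ) : Set (Measure (Vec d × Vec d)) :=
  {π | IsProbabilityMeasure π ∧
    (∀ i, π.map (fun p => p.1 i) = μ i) ∧
    (∀ i, π.map (fun p => p.2 i) = ν i) ∧
    (∀ i, (π[fun p => p.2 i | MeasurableSpace.comap Prod.fst inferInstance])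
      =ᵐ[π] fun p => p.1 i)}

/-- Linear Increment of Marginals: `ν_i = μ_i * (a_i)_#κ` for a centered non-Dirac
probability measure `κ`, i.e. `law(Y_i) = law(X_i + a_i Z)` with `Z ∼ κ` independent,
`E[Z] = 0` and `P[Z ≠ 0] > 0`. -/
def LIM {d : ℕ} (μ ν : Fin d → Measure ℝ) (a : Fin d → ℝ) (κ : Measure ℝ) : Prop :=
  IsProbabilityMeasure κ ∧ Integrable (fun z : ℝ => z) κ ∧ (∫ z, z ∂κ) = 0 ∧
    κ {(0 : ℝ)}ᶜ ≠ 0 ∧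
    ∀ i, ν i = ((μ i).prod (κ.map fun z => a i * z)).map fun p => p.1 + p.2

/-- The covariance cost `Σ_{i<j} c_{ij} y_i y_j`. -/
noncomputable def covCost {d : ℕ} (c : Fin d → Fin d → ℝ) (y : Vec d) : ℝ :=
  ∑ i, ∑ j, if i < j then c i j * y i * y j else 0

/-- `π` is a maximizer of the MMOT problem `sup_{π ∈ ℳ(μ,ν)} ∫ c(y) π(dx,dy)`. -/
def IsMaximizer {d : ℕ} (μ ν : Fin d → Measure ℝ) (c : Fin d → Fin d → ℝ)
    (π : Measure (Vec d × Vec d)) : Prop :=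
  π ∈ PairMartSet μ ν ∧
    ∀ π' ∈ PairMartSet μ ν, ∫ p, covCost c p.2 ∂π' ≤ ∫ p, covCost c p.2 ∂π

/-! For a square-integrable martingale coupling, `E[c(Y)] = E[c(X)] + E[c(Y - X)]`: the cross
terms `E[X_i (Y_j - X_j)]` vanish. Under LIM the increment variances `E[(Y_i - X_i)²] = a_i² E[Z²]`
are fixed by the marginals, so Cauchy–Schwarz and `c_ij ≥ 0` give `E[c(Y - X)] ≤ c(a) E[Z²]`,
with equality on an edge `i ∼ j` only if `a_j (Y_i - X_i) = a_i (Y_j - X_j)` a.s. The coupling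
`(X, X + Z a)` with `X ∼ γ ∈ Π(μ)` and `Z ∼ κ` independent attains the bound, so
`E_γ[c] + c(a) E[Z²] ≤ E_π[c(Y)] ≤ E_{π¹}[c] + c(a) E[Z²]`. Hence `π¹` is optimal, and `γ = π¹`
forces equality on every edge; along the connected graph, `Y - X` is then a.s. a multiple of `a`.
-/

section SquareIntegrable

variable {Ω : Type*} [MeasurableSpace Ω] {ρ : Measure Ω}

lemma memLp_two_of_map_eq {f : Ω → ℝ} (hf : Measurable f) {m : Measure ℝ} (hmap : ρ.map f = m)
    (hm : Integrable (fun x : ℝ => x ^ 2) m) : MemLp f 2 ρ := by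
  subst hmap
  exact (memLp_map_measure_iff aestronglyMeasurable_id hf.aemeasurable).1
    ((memLp_two_iff_integrable_sq aestronglyMeasurable_id).2 hm)

lemma integrable_mul_of_memLp_two {f g : Ω → ℝ} (hf : MemLp f 2 ρ) (hg : MemLp g 2 ρ) :
    Integrable (fun ω => f ω * g ω) ρ :=
  hf.integrable_mul hg

lemma integral_sq_sub_eq {U V : Ω → ℝ} (hU : MemLp U 2 ρ) (hV : MemLp V 2 ρ) {α β s : ℝ}
    (hU2 : ∫ ω, U ω ^ 2 ∂ρ = α ^ 2 * s) (hV2 : ∫ ω, V ω ^ 2 ∂ρ = β ^ 2 * s) :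
    ∫ ω, (β * U ω - α * V ω) ^ 2 ∂ρ = 2 * α * β * (α * β * s - ∫ ω, U ω * V ω ∂ρ) := by
  have hUU : Integrable (fun ω => U ω ^ 2) ρ := hU.integrable_sq
  have hVV : Integrable (fun ω => V ω ^ 2) ρ := hV.integrable_sq
  have hUV : Integrable (fun ω => U ω * V ω) ρ := integrable_mul_of_memLp_two hU hV
  calc ∫ ω, (β * U ω - α * V ω) ^ 2 ∂ρ
      = ∫ ω, (β ^ 2 * U ω ^ 2 + α ^ 2 * V ω ^ 2 - 2 * α * β * (U ω * V ω)) ∂ρ := by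
        congr 1; ext ω; ring
    _ = β ^ 2 * ∫ ω, U ω ^ 2 ∂ρ + α ^ 2 * ∫ ω, V ω ^ 2 ∂ρ
          - 2 * α * β * ∫ ω, U ω * V ω ∂ρ := by
        have hsum : Integrable (fun ω => β ^ 2 * U ω ^ 2 + α ^ 2 * V ω ^ 2) ρ :=
          (hUU.const_mul _).add (hVV.const_mul _)
        rw [integral_sub hsum (hUV.const_mul _), integral_add (hUU.const_mul _) (hVV.const_mul _),
          integral_const_mul, integral_const_mul, integral_const_mul]
    _ = 2 * α * β * (α * β * s - ∫ ω, U ω * V ω ∂ρ) := by rw [hU2, hV2]; ring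

lemma integral_mul_le_of_integral_sq_eq {U V : Ω → ℝ} (hU : MemLp U 2 ρ) (hV : MemLp V 2 ρ)
    {α β s : ℝ} (hα : 0 < α) (hβ : 0 < β)
    (hU2 : ∫ ω, U ω ^ 2 ∂ρ = α ^ 2 * s) (hV2 : ∫ ω, V ω ^ 2 ∂ρ = β ^ 2 * s) :
    ∫ ω, U ω * V ω ∂ρ ≤ α * β * s := by
  have h := integral_sq_sub_eq hU hV hU2 hV2
  have h0 : 0 ≤ ∫ ω, (β * U ω - α * V ω) ^ 2 ∂ρ := integral_nonneg fun ω => sq_nonneg _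
  nlinarith [mul_pos hα hβ]

lemma ae_mul_eq_mul_of_integral_mul_eq {U V : Ω → ℝ} (hU : MemLp U 2 ρ) (hV : MemLp V 2 ρ)
    {α β s : ℝ} (hU2 : ∫ ω, U ω ^ 2 ∂ρ = α ^ 2 * s) (hV2 : ∫ ω, V ω ^ 2 ∂ρ = β ^ 2 * s)
    (hUV : ∫ ω, U ω * V ω ∂ρ = α * β * s) :
    ∀ᵐ ω ∂ρ, β * U ω = α * V ω := by
  have h := integral_sq_sub_eq hU hV hU2 hV2
  rw [hUV, sub_self, mul_zero] at h
  have hint : Integrable (fun ω => (β * U ω - α * V ω) ^ 2) ρ :=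
    ((hU.const_mul β).sub (hV.const_mul α)).integrable_sq
  filter_upwards [(integral_eq_zero_iff_of_nonneg (fun ω => sq_nonneg _) hint).1 h] with ω hω
  exact sub_eq_zero.1 (pow_eq_zero_iff two_ne_zero |>.1 hω)

end SquareIntegrable

section CovCost

variable {d : ℕ} (c : Fin d → Fin d → ℝ)

lemma continuous_covCost : Continuous (covCost c) := by
  unfold covCost
  refine continuous_finsetSum _ fun i _ => continuous_finsetSum _ fun j _ => ?_
  split_ifs <;> fun_prop

lemma covCost_smul (t : ℝ) (y : Vec d) : covCost c (t • y) = t ^ 2 * covCost c y := by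
  simp only [covCost, Finset.mul_sum, Pi.smul_apply, smul_eq_mul]
  refine Finset.sum_congr rfl fun i _ => Finset.sum_congr rfl fun j _ => ?_
  split_ifs <;> ring

lemma covCost_mul_eq_sum (y : Vec d) (s : ℝ) :
    covCost c y * s = ∑ i, ∑ j, if i < j then c i j * (y i * y j * s) else 0 := by
  simp only [covCost, Finset.sum_mul]
  refine Finset.sum_congr rfl fun i _ => Finset.sum_congr rfl fun j _ => ?_
  split_ifs <;> ring

variable {Ω : Type*} [MeasurableSpace Ω] {ρ : Measure Ω}

lemma integral_covCost {U : Ω → Vec d} (hU : ∀ i, MemLp (fun ω => U ω i) 2 ρ) :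
    ∫ ω, covCost c (U ω) ∂ρ
      = ∑ i, ∑ j, if i < j then c i j * ∫ ω, U ω i * U ω j ∂ρ else 0 := by
  have hterm : ∀ i j, Integrable (fun ω => if i < j then c i j * U ω i * U ω j else 0) ρ := by
    intro i j
    split_ifs
    · exact ((integrable_mul_of_memLp_two (hU i) (hU j)).const_mul (c i j)).congr
        (ae_of_all _ fun ω => (mul_assoc _ _ _).symm)
    · exact integrable_zero _ _ _
  simp only [covCost]
  rw [integral_finsetSum _ fun i _ => integrable_finsetSum _ fun j _ => hterm i j]
  refine Finset.sum_congr rfl fun i _ => ?_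
  rw [integral_finsetSum _ fun j _ => hterm i j]
  refine Finset.sum_congr rfl fun j _ => ?_
  split_ifs
  · simp only [mul_assoc, integral_const_mul]
  · exact integral_zero _ _

lemma exists_eq_smul_of_adjRel {a : Vec d} (ha : ∀ i, 0 < a i)
    (hconn : ∀ i j : Fin d, Relation.ReflTransGen (AdjRel c) i j) {u : Vec d}
    (hu : ∀ i j, AdjRel c i j → a j * u i = a i * u j) :
    ∃ t : ℝ, u = t • a := by
  rcases isEmpty_or_nonempty (Fin d) with hd | ⟨⟨i₀⟩⟩
  · exact ⟨0, Subsingleton.elim _ _⟩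
  refine ⟨u i₀ / a i₀, funext fun j => ?_⟩
  have hj : a j * u i₀ = a i₀ * u j := by
    induction hconn i₀ j with
    | refl => ring
    | @tail k l _ hkl ih =>
      refine mul_left_cancel₀ (ha k).ne' ?_
      linear_combination a l * ih + a i₀ * hu k l hkl
  simp only [Pi.smul_apply, smul_eq_mul]
  field_simp [(ha i₀).ne']
  linear_combination -hj

variable {c}

lemma ite_integral_mul_le (hc : ∀ i j, i < j → 0 ≤ c i j) {a : Vec d} (ha : ∀ i, 0 < a i)
    {s : ℝ} {U : Ω → Vec d} (hU : ∀ i, MemLp (fun ω => U ω i) 2 ρ)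
    (hU2 : ∀ i, ∫ ω, U ω i ^ 2 ∂ρ = a i ^ 2 * s) (i j : Fin d) :
    (if i < j then c i j * ∫ ω, U ω i * U ω j ∂ρ else 0)
      ≤ if i < j then c i j * (a i * a j * s) else 0 := by
  split_ifs with hij
  · exact mul_le_mul_of_nonneg_left
      (integral_mul_le_of_integral_sq_eq (hU i) (hU j) (ha i) (ha j) (hU2 i) (hU2 j)) (hc i j hij)
  · rfl

lemma integral_covCost_le (hc : ∀ i j, i < j → 0 ≤ c i j) {a : Vec d} (ha : ∀ i, 0 < a i)
    {s : ℝ} {U : Ω → Vec d} (hU : ∀ i, MemLp (fun ω => U ω i) 2 ρ)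
    (hU2 : ∀ i, ∫ ω, U ω i ^ 2 ∂ρ = a i ^ 2 * s) :
    ∫ ω, covCost c (U ω) ∂ρ ≤ covCost c a * s := by
  rw [integral_covCost c hU, covCost_mul_eq_sum]
  exact Finset.sum_le_sum fun i _ => Finset.sum_le_sum fun j _ =>
    ite_integral_mul_le hc ha hU hU2 i j

lemma ae_exists_eq_smul_of_integral_covCost_eq (hc : ∀ i j, i < j → 0 ≤ c i j)
    (hconn : ∀ i j : Fin d, Relation.ReflTransGen (AdjRel c) i j) {a : Vec d}
    (ha : ∀ i, 0 < a i) {s : ℝ} {U : Ω → Vec d} (hU : ∀ i, MemLp (fun ω => U ω i) 2 ρ)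
    (hU2 : ∀ i, ∫ ω, U ω i ^ 2 ∂ρ = a i ^ 2 * s)
    (heq : ∫ ω, covCost c (U ω) ∂ρ = covCost c a * s) :
    ∀ᵐ ω ∂ρ, ∃ t : ℝ, U ω = t • a := by
  have hle := ite_integral_mul_le hc ha hU hU2
  rw [integral_covCost c hU, covCost_mul_eq_sum] at heq
  have hterm : ∀ i j, (if i < j then c i j * ∫ ω, U ω i * U ω j ∂ρ else 0)
      = if i < j then c i j * (a i * a j * s) else 0 := fun i j =>
    (Finset.sum_eq_sum_iff_of_le fun j _ => hle i j).1
      ((Finset.sum_eq_sum_iff_of_le fun i _ => Finset.sum_le_sum fun j _ => hle i j).1 heq i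
        (Finset.mem_univ i)) j (Finset.mem_univ j)
  have hedge : ∀ i j, i < j → 0 < c i j → ∀ᵐ ω ∂ρ, a j * U ω i = a i * U ω j := by
    intro i j hij hcij
    have hij' := hterm i j
    simp only [if_pos hij] at hij'
    exact ae_mul_eq_mul_of_integral_mul_eq (hU i) (hU j) (hU2 i) (hU2 j)
      (mul_left_cancel₀ hcij.ne' hij')
  have hall : ∀ᵐ ω ∂ρ, ∀ i j, AdjRel c i j → a j * U ω i = a i * U ω j := by
    simp only [ae_all_iff]
    rintro i j (⟨hij, hcij⟩ | ⟨hji, hcji⟩)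
    · exact hedge i j hij hcij
    · exact (hedge j i hji hcji).mono fun ω h => h.symm
  filter_upwards [hall] with ω hω
  exact exists_eq_smul_of_adjRel c ha hconn hω

end CovCost

lemma integral_mul_eq_of_condExp_ae_eq {Ω : Type*} {m m₀ : MeasurableSpace Ω}
    {μ : Measure[m₀] Ω} (hm : m ≤ m₀) [SigmaFinite (μ.trim hm)] {f g h : Ω → ℝ}
    (hf : StronglyMeasurable[m] f) (hfg : Integrable (f * g) μ) (hg : Integrable g μ)
    (hgh : μ[g | m] =ᵐ[μ] h) :
    ∫ ω, f ω * g ω ∂μ = ∫ ω, f ω * h ω ∂μ := by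
  rw [← integral_condExp hm]
  refine integral_congr_ae ?_
  filter_upwards [condExp_mul_of_stronglyMeasurable_left hf hfg hg, hgh] with ω hfg' hgh'
  change (μ[f * g | m]) ω = _
  rw [hfg', Pi.mul_apply, hgh']

section MartingaleCoupling

variable {d : ℕ} {μ ν : Fin d → Measure ℝ} {ρ : Measure (Vec d × Vec d)}
  (hρ : ρ ∈ PairMartSet μ ν)
include hρ

lemma memLp_fst_apply_of_mem_pairMartSet
    (hμ2 : ∀ i, Integrable (fun x : ℝ => x ^ 2) (μ i)) (i : Fin d) :
    MemLp (fun p : Vec d × Vec d => p.1 i) 2 ρ :=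
  memLp_two_of_map_eq (by fun_prop) (hρ.2.1 i) (hμ2 i)

lemma memLp_snd_apply_of_mem_pairMartSet
    (hν2 : ∀ i, Integrable (fun x : ℝ => x ^ 2) (ν i)) (i : Fin d) :
    MemLp (fun p : Vec d × Vec d => p.2 i) 2 ρ :=
  memLp_two_of_map_eq (by fun_prop) (hρ.2.2.1 i) (hν2 i)

lemma map_fst_map_apply_of_mem_pairMartSet (i : Fin d) :
    (ρ.map Prod.fst).map (fun x => x i) = μ i := by
  rw [Measure.map_map (measurable_pi_apply i) measurable_fst]
  exact hρ.2.1 i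

lemma integral_fst_mul_snd_of_mem_pairMartSet
    (hμ2 : ∀ i, Integrable (fun x : ℝ => x ^ 2) (μ i))
    (hν2 : ∀ i, Integrable (fun x : ℝ => x ^ 2) (ν i)) (i j : Fin d) :
    ∫ p, p.1 i * p.2 j ∂ρ = ∫ p, p.1 i * p.1 j ∂ρ := by
  have := hρ.1
  exact integral_mul_eq_of_condExp_ae_eq measurable_fst.comap_le
    ((measurable_pi_apply i).comp (comap_measurable Prod.fst)).stronglyMeasurable
    ((memLp_fst_apply_of_mem_pairMartSet hρ hμ2 i).integrable_mul
      (memLp_snd_apply_of_mem_pairMartSet hρ hν2 j))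
    ((memLp_snd_apply_of_mem_pairMartSet hρ hν2 j).integrable one_le_two) (hρ.2.2.2 j)

lemma integral_incr_mul_incr_of_mem_pairMartSet
    (hμ2 : ∀ i, Integrable (fun x : ℝ => x ^ 2) (μ i))
    (hν2 : ∀ i, Integrable (fun x : ℝ => x ^ 2) (ν i)) (i j : Fin d) :
    ∫ p, (p.2 - p.1) i * (p.2 - p.1) j ∂ρ
      = ∫ p, p.2 i * p.2 j ∂ρ - ∫ p, p.1 i * p.1 j ∂ρ := by
  have hX := memLp_fst_apply_of_mem_pairMartSet hρ hμ2
  have hY := memLp_snd_apply_of_mem_pairMartSet hρ hν2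
  have hXY := integral_fst_mul_snd_of_mem_pairMartSet hρ hμ2 hν2
  calc ∫ p, (p.2 - p.1) i * (p.2 - p.1) j ∂ρ
      = ∫ p, (p.2 i * p.2 j - p.1 j * p.2 i - (p.1 i * p.2 j - p.1 i * p.1 j)) ∂ρ := by
        congr 1; ext p; simp only [Pi.sub_apply]; ring
    _ = ∫ p, p.2 i * p.2 j ∂ρ - ∫ p, p.1 j * p.2 i ∂ρ
          - (∫ p, p.1 i * p.2 j ∂ρ - ∫ p, p.1 i * p.1 j ∂ρ) := by
        have hYY := integrable_mul_of_memLp_two (hY i) (hY j)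
        have hXjYi := integrable_mul_of_memLp_two (hX j) (hY i)
        have hXiYj := integrable_mul_of_memLp_two (hX i) (hY j)
        have hXX := integrable_mul_of_memLp_two (hX i) (hX j)
        have hl : Integrable (fun p : Vec d × Vec d => p.2 i * p.2 j - p.1 j * p.2 i) ρ :=
          hYY.sub hXjYi
        have hr : Integrable (fun p : Vec d × Vec d => p.1 i * p.2 j - p.1 i * p.1 j) ρ :=
          hXiYj.sub hXX
        rw [integral_sub hl hr, integral_sub hYY hXjYi, integral_sub hXiYj hXX]
    _ = ∫ p, p.2 i * p.2 j ∂ρ - ∫ p, p.1 i * p.1 j ∂ρ := by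
        rw [hXY, hXY]
        simp only [mul_comm, sub_self, sub_zero]

lemma integral_incr_sq_of_mem_pairMartSet
    (hμ2 : ∀ i, Integrable (fun x : ℝ => x ^ 2) (μ i))
    (hν2 : ∀ i, Integrable (fun x : ℝ => x ^ 2) (ν i)) (i : Fin d) :
    ∫ p, (p.2 - p.1) i ^ 2 ∂ρ = ∫ y, y ^ 2 ∂(ν i) - ∫ x, x ^ 2 ∂(μ i) := by
  simp only [sq, integral_incr_mul_incr_of_mem_pairMartSet hρ hμ2 hν2, ← hρ.2.1 i,
    ← hρ.2.2.1 i]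
  rw [integral_map (by fun_prop) (by fun_prop), integral_map (by fun_prop) (by fun_prop)]

/-- Polarization of `covCost` at `y = x + (y - x)`: the cross term integrates to zero. -/
lemma integral_covCost_snd_of_mem_pairMartSet
    (hμ2 : ∀ i, Integrable (fun x : ℝ => x ^ 2) (μ i))
    (hν2 : ∀ i, Integrable (fun x : ℝ => x ^ 2) (ν i)) (c : Fin d → Fin d → ℝ) :
    ∫ p, covCost c p.2 ∂ρ = ∫ p, covCost c p.1 ∂ρ + ∫ p, covCost c (p.2 - p.1) ∂ρ := by
  have hX := memLp_fst_apply_of_mem_pairMartSet hρ hμ2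
  have hY := memLp_snd_apply_of_mem_pairMartSet hρ hν2
  have hU : ∀ i, MemLp (fun p : Vec d × Vec d => (p.2 - p.1) i) 2 ρ := fun i => (hY i).sub (hX i)
  rw [integral_covCost c hY, integral_covCost c hX, integral_covCost c hU,
    ← Finset.sum_add_distrib]
  refine Finset.sum_congr rfl fun i _ => ?_
  rw [← Finset.sum_add_distrib]
  refine Finset.sum_congr rfl fun j _ => ?_
  split_ifs
  · rw [integral_incr_mul_incr_of_mem_pairMartSet hρ hμ2 hν2]; ring
  · ring

end MartingaleCoupling

section ShiftCoupling

variable {d : ℕ}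

/-- The coupling `(X, X + Z • a)` with `X ∼ γ` and `Z ∼ κ` independent. -/
noncomputable def shiftCoupling (γ : Measure (Vec d)) (κ : Measure ℝ) (a : Vec d) :
    Measure (Vec d × Vec d) :=
  (γ.prod κ).map fun q => (q.1, q.1 + q.2 • a)

variable {γ : Measure (Vec d)} {κ : Measure ℝ} (a : Vec d)

lemma measurable_shift : Measurable fun q : Vec d × ℝ => (q.1, q.1 + q.2 • a) := by fun_prop

instance [IsProbabilityMeasure γ] [IsProbabilityMeasure κ] :
    IsProbabilityMeasure (shiftCoupling γ κ a) :=
  Measure.isProbabilityMeasure_map (measurable_shift a).aemeasurable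

lemma shiftCoupling_map_fst [SFinite γ] [IsProbabilityMeasure κ] :
    (shiftCoupling γ κ a).map Prod.fst = γ := by
  rw [shiftCoupling, Measure.map_map measurable_fst (measurable_shift a)]
  exact Measure.fst_prod

lemma shiftCoupling_map_fst_apply [SFinite γ] [IsProbabilityMeasure κ] (i : Fin d) :
    (shiftCoupling γ κ a).map (fun p => p.1 i) = γ.map fun x => x i := by
  change Measure.map ((fun x : Vec d => x i) ∘ Prod.fst) _ = _
  rw [← Measure.map_map (measurable_pi_apply i) measurable_fst, shiftCoupling_map_fst]

lemma shiftCoupling_map_snd_apply [SFinite γ] [SFinite κ] (i : Fin d) :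
    (shiftCoupling γ κ a).map (fun p => p.2 i)
      = ((γ.map fun x => x i).prod (κ.map fun z => a i * z)).map fun p => p.1 + p.2 := by
  rw [shiftCoupling, Measure.map_map (by fun_prop) (measurable_shift a),
    Measure.map_prod_map _ _ (measurable_pi_apply i) (by fun_prop),
    Measure.map_map (by fun_prop) (by fun_prop)]
  congr 1
  ext q
  simp [mul_comm]

lemma integral_incr_shiftCoupling [IsProbabilityMeasure γ] [SFinite κ] {f : Vec d → ℝ}
    (hf : Measurable f) :
    ∫ p, f (p.2 - p.1) ∂(shiftCoupling γ κ a) = ∫ z, f (z • a) ∂κ := by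
  rw [shiftCoupling, integral_map (measurable_shift a).aemeasurable
    (by fun_prop : Measurable fun p : Vec d × Vec d => f (p.2 - p.1)).aestronglyMeasurable]
  simp only [add_sub_cancel_left]
  rw [integral_fun_snd (fun z => f (z • a)), probReal_univ, one_smul]

lemma condExp_snd_apply_shiftCoupling [IsProbabilityMeasure γ] [IsProbabilityMeasure κ]
    (hκ1 : Integrable (fun z : ℝ => z) κ) (hκ0 : ∫ z, z ∂κ = 0) {i : Fin d}
    (hγ1 : Integrable (fun x => x i) γ) :
    (shiftCoupling γ κ a)[fun p => p.2 i | MeasurableSpace.comap Prod.fst inferInstance]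
      =ᵐ[shiftCoupling γ κ a] fun p => p.1 i := by
  have hX : Integrable (fun q : Vec d × ℝ => q.1 i) (γ.prod κ) := hγ1.comp_fst κ
  have hZ : Integrable (fun q : Vec d × ℝ => q.2 * a i) (γ.prod κ) :=
    (hκ1.mul_const (a i)).comp_snd γ
  have hXmap : Integrable (fun p : Vec d × Vec d => p.1 i) (shiftCoupling γ κ a) :=
    (integrable_map_measure (by fun_prop) (measurable_shift a).aemeasurable).2 hX
  have hYmap : Integrable (fun p : Vec d × Vec d => p.2 i) (shiftCoupling γ κ a) := by
    refine (integrable_map_measure (by fun_prop) (measurable_shift a).aemeasurable).2 ?_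
    exact (hX.add hZ).congr (ae_of_all _ fun q => by simp)
  refine (ae_eq_condExp_of_forall_setIntegral_eq measurable_fst.comap_le hYmap
    (fun _ _ _ => hXmap.integrableOn) ?_
    ((measurable_pi_apply i).comp (comap_measurable Prod.fst)).aestronglyMeasurable).symm
  rintro _ ⟨t, ht, rfl⟩ -
  rw [shiftCoupling, setIntegral_map (measurable_fst ht) (by fun_prop)
      (measurable_shift a).aemeasurable,
    setIntegral_map (measurable_fst ht) (by fun_prop) (measurable_shift a).aemeasurable]
  have hZ0 : ∫ q in Prod.fst ⁻¹' t, q.2 * a i ∂(γ.prod κ) = 0 := by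
    rw [← Set.prod_univ, ← Measure.prod_restrict, Measure.restrict_univ,
      integral_fun_snd (fun z => z * a i), integral_mul_const, hκ0, zero_mul, smul_zero]
  change ∫ q in Prod.fst ⁻¹' t, q.1 i ∂(γ.prod κ)
    = ∫ q in Prod.fst ⁻¹' t, (q.1 i + q.2 * a i) ∂(γ.prod κ)
  rw [integral_add hX.integrableOn hZ.integrableOn, hZ0, add_zero]

variable {μ ν : Fin d → Measure ℝ}

lemma shiftCoupling_mem_pairMartSet [IsProbabilityMeasure γ]
    (hγ : ∀ i, γ.map (fun x => x i) = μ i)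
    (hμ2 : ∀ i, Integrable (fun x : ℝ => x ^ 2) (μ i)) (hLIM : LIM μ ν a κ) :
    shiftCoupling γ κ a ∈ PairMartSet μ ν := by
  obtain ⟨hκ, hκ1, hκ0, -, hν⟩ := hLIM
  refine ⟨inferInstance, fun i => ?_, fun i => ?_, fun i => ?_⟩
  · rw [shiftCoupling_map_fst_apply, hγ]
  · rw [shiftCoupling_map_snd_apply, hγ, hν]
  · exact condExp_snd_apply_shiftCoupling a hκ1 hκ0
      ((memLp_two_of_map_eq (by fun_prop) (hγ i) (hμ2 i)).integrable one_le_two)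

lemma integral_covCost_snd_shiftCoupling [IsProbabilityMeasure γ]
    (hγ : ∀ i, γ.map (fun x => x i) = μ i)
    (hμ2 : ∀ i, Integrable (fun x : ℝ => x ^ 2) (μ i))
    (hν2 : ∀ i, Integrable (fun x : ℝ => x ^ 2) (ν i)) (hLIM : LIM μ ν a κ)
    (c : Fin d → Fin d → ℝ) :
    ∫ p, covCost c p.2 ∂(shiftCoupling γ κ a)
      = ∫ x, covCost c x ∂γ + covCost c a * ∫ z, z ^ 2 ∂κ := by
  have := hLIM.1
  rw [integral_covCost_snd_of_mem_pairMartSet (shiftCoupling_mem_pairMartSet a hγ hμ2 hLIM)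
      hμ2 hν2, integral_incr_shiftCoupling a (continuous_covCost c).measurable,
    ← integral_map measurable_fst.aemeasurable (continuous_covCost c).aestronglyMeasurable,
    shiftCoupling_map_fst]
  simp only [covCost_smul, integral_mul_const]
  ring

end ShiftCoupling

/-- The increment variances depend only on the marginals, so they can be read off the shift
coupling. -/
lemma integral_incr_sq_of_mem_pairMartSet_of_lim {d : ℕ} {μ ν : Fin d → Measure ℝ}
    {a : Vec d} {κ : Measure ℝ} (hLIM : LIM μ ν a κ)
    (hμ2 : ∀ i, Integrable (fun x : ℝ => x ^ 2) (μ i))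
    (hν2 : ∀ i, Integrable (fun x : ℝ => x ^ 2) (ν i))
    {ρ : Measure (Vec d × Vec d)} (hρ : ρ ∈ PairMartSet μ ν) (i : Fin d) :
    ∫ p, (p.2 - p.1) i ^ 2 ∂ρ = a i ^ 2 * ∫ z, z ^ 2 ∂κ := by
  have := hρ.1
  have := hLIM.1
  have := Measure.isProbabilityMeasure_map (μ := ρ) measurable_fst.aemeasurable
  have hshift := shiftCoupling_mem_pairMartSet (κ := κ) a
    (map_fst_map_apply_of_mem_pairMartSet hρ) hμ2 hLIM
  rw [integral_incr_sq_of_mem_pairMartSet hρ hμ2 hν2,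
    ← integral_incr_sq_of_mem_pairMartSet hshift hμ2 hν2,
    integral_incr_shiftCoupling a (f := fun u => u i ^ 2) (by fun_prop)]
  simp only [Pi.smul_apply, smul_eq_mul, mul_pow, integral_mul_const]
  ring

lemma ae_ae_condKernel_of_ae {α Ω : Type*} [MeasurableSpace α] [MeasurableSpace Ω]
    [StandardBorelSpace Ω] [Nonempty Ω] {π : Measure (α × Ω)} [IsFiniteMeasure π]
    {P : α × Ω → Prop} (h : ∀ᵐ p ∂π, P p) :
    ∀ᵐ x ∂π.fst, ∀ᵐ y ∂π.condKernel x, P (x, y) := by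
  rw [← π.disintegrate π.condKernel] at h
  exact Measure.ae_ae_of_ae_compProd h

theorem mmot_covariance_structure_general {d : ℕ} (μ ν : Fin d → Measure ℝ)
    (hμ2 : ∀ i, Integrable (fun x : ℝ => x ^ 2) (μ i))
    (hν2 : ∀ i, Integrable (fun x : ℝ => x ^ 2) (ν i))
    (c : Fin d → Fin d → ℝ) (hc : ∀ i j, i < j → 0 ≤ c i j)
    (hconn : ∀ i j : Fin d, Relation.ReflTransGen (AdjRel c) i j)
    (a : Fin d → ℝ) (ha : ∀ i, 0 < a i)
    (κ : Measure ℝ) (hLIM : LIM μ ν a κ)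
    (π : Measure (Vec d × Vec d)) (hπprob : IsProbabilityMeasure π)
    (hπ : IsMaximizer μ ν c π) :
    -- (1) the disintegration kernels are supported on `L + x`
    (∀ᵐ x ∂π.fst, π.condKernel x {y : Vec d | ¬ ∃ s : ℝ, y = x + s • a} = 0) ∧
    -- (2) the first marginal is an optimal transport plan for the cost `c(x)`
    ((∀ i, (π.map Prod.fst).map (fun x => x i) = μ i) ∧
      ∀ γ : Measure (Vec d), IsProbabilityMeasure γ →
        (∀ i, γ.map (fun x => x i) = μ i) → Integrable (covCost c) γ →
        ∫ x, covCost c x ∂γ ≤ ∫ x, covCost c x ∂(π.map Prod.fst)) := by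
  obtain ⟨hπM, hπopt⟩ := hπ
  have hπ₁ := map_fst_map_apply_of_mem_pairMartSet hπM
  have hshift : ∀ γ : Measure (Vec d), IsProbabilityMeasure γ →
      (∀ i, γ.map (fun x => x i) = μ i) →
      ∫ x, covCost c x ∂γ + covCost c a * ∫ z, z ^ 2 ∂κ ≤ ∫ p, covCost c p.2 ∂π :=
    fun γ _ hγ => integral_covCost_snd_shiftCoupling a hγ hμ2 hν2 hLIM c ▸
      hπopt _ (shiftCoupling_mem_pairMartSet a hγ hμ2 hLIM)
  have hdecomp : ∫ p, covCost c p.2 ∂π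
      = ∫ x, covCost c x ∂(π.map Prod.fst) + ∫ p, covCost c (p.2 - p.1) ∂π := by
    rw [integral_covCost_snd_of_mem_pairMartSet hπM hμ2 hν2,
      integral_map measurable_fst.aemeasurable (continuous_covCost c).aestronglyMeasurable]
  have hU : ∀ i, MemLp (fun p : Vec d × Vec d => (p.2 - p.1) i) 2 π := fun i =>
    (memLp_snd_apply_of_mem_pairMartSet hπM hν2 i).sub
      (memLp_fst_apply_of_mem_pairMartSet hπM hμ2 i)
  have hU2 := integral_incr_sq_of_mem_pairMartSet_of_lim hLIM hμ2 hν2 hπM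
  have hle := integral_covCost_le hc ha hU hU2
  refine ⟨?_, hπ₁, fun γ hγ hγμ _ => by linarith [hshift γ hγ hγμ]⟩
  have heq := le_antisymm hle <| by
    linarith [hshift _ (Measure.isProbabilityMeasure_map measurable_fst.aemeasurable) hπ₁]
  filter_upwards [ae_ae_condKernel_of_ae
    (ae_exists_eq_smul_of_integral_covCost_eq hc hconn ha hU hU2 heq)] with x hx
  rw [← ae_iff]
  filter_upwards [hx] with y ⟨t, ht⟩
  exact ⟨t, eq_add_of_sub_eq' ht⟩

/-- Theorem: structure of MMOT optimizers for the covariance cost.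
Under LIM marginals and a connected nonnegative coefficient graph, every maximizer `π`,
disintegrated over its first marginal as `π(dx,dy) = π_x(dy) π¹(dx)`, has kernels supported
on the line `L + x` with `L = span{a}`, and its first marginal `π¹` is an optimal transport
plan in `Π(μ_1,…,μ_d)` for the cost `Σ_{i<j} c_{ij} x_i x_j`. -/
theorem mmot_covariance_structure {d : ℕ} (μ ν : Fin d → Measure ℝ)
    (hμprob : ∀ i, IsProbabilityMeasure (μ i)) (hνprob : ∀ i, IsProbabilityMeasure (ν i))
    (hμ2 : ∀ i, Integrable (fun x : ℝ => x ^ 2) (μ i))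
    (hν2 : ∀ i, Integrable (fun x : ℝ => x ^ 2) (ν i))
    (c : Fin d → Fin d → ℝ) (hc : ∀ i j, i < j → 0 ≤ c i j)
    (hconn : ∀ i j : Fin d, Relation.ReflTransGen (AdjRel c) i j)
    (a : Fin d → ℝ) (ha : ∀ i, 0 < a i)
    (κ : Measure ℝ) (hLIM : LIM μ ν a κ)
    (π : Measure (Vec d × Vec d)) (hπprob : IsProbabilityMeasure π)
    (hπ : IsMaximizer μ ν c π) :
    -- (1) the disintegration kernels are supported on `L + x`
    (∀ᵐ x ∂π.fst, π.condKernel x {y : Vec d | ¬ ∃ s : ℝ, y = x + s • a} = 0) ∧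
    -- (2) the first marginal is an optimal transport plan for the cost `c(x)`
    ((∀ i, (π.map Prod.fst).map (fun x => x i) = μ i) ∧
      ∀ γ : Measure (Vec d), IsProbabilityMeasure γ →
        (∀ i, γ.map (fun x => x i) = μ i) → Integrable (covCost c) γ →
        ∫ x, covCost c x ∂γ ≤ ∫ x, covCost c x ∂(π.map Prod.fst)) :=
  mmot_covariance_structure_general μ ν hμ2 hν2 c hc hconn a ha κ hLIM π hπprob hπ

end MMOT
end

section
/- Let d = 2 and T = 2, with marginals μ_{1,1} = δ_0, μ_{2,1} = (1/4)(δ_{−2} + δ_{−1} + δ_1 + δ_2), and μ_{1,2} = μ_{2,2} = (1/2)(δ_{−1} + δ_1). Then ℳ(μ̌) is not a singleton, yet for every π ∈ ℳ(μ̌) one has E_π[X_{2,1} X_{2,2}] = 0; in particular every π ∈ ℳ(μ̌) is simultaneously an optimizer of both the maximization and the minimization MMOT problem with cost c(x) = x_{2,1} x_{2,2}. -/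
/-!
Under any `π ∈ ℳ(μ̌)` the second coordinate cannot move: `X_{2,2}` and `X_{1,2}` both take
the values `±1` and `E[X_{2,2} | X_1] = X_{1,2}`, which forces `X_{2,2} = X_{1,2}`. Conditioning
on `X_1` then gives `E[X_{2,1} X_{2,2}] = E[X_{1,2} X_{2,1}] = E[X_{1,2} X_{1,1}] = 0`, since
`X_{1,1} = 0`.

For non-uniqueness keep a Rademacher sign `ε` as the second coordinate at both times and put
`X_{2,1} = S · c(ε)` with `S` independent of `ε` and of mean zero: `S ∼ μ_{2,1}, c ≡ 1` and
`S ∼ μ_{1,2}, c(ε) = (3 + ε)/2` both give martingales with the prescribed marginals, and they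
differ in `E[X_{1,2} X_{2,1}²]`.
-/

open MeasureTheory Filter
open scoped ENNReal

namespace MMOT

/-- Path space `𝒳 = (ℝ^d)^T`. -/
abbrev Path (T d : ℕ) := Fin T → Fin d → ℝ

/-- σ-algebra generated by the coordinates `X_0, …, X_t` (0-indexed). -/
noncomputable def pastSigma (T d : ℕ) (t : ℕ) : MeasurableSpace (Path T d) :=
  ⨆ s : Fin T, ⨆ _ : (s : ℕ) ≤ t, MeasurableSpace.comap (fun x => x s) inferInstance

def HasMarginals {T d : ℕ} (π : Measure (Path T d)) (μ : Fin T → Fin d → Measure ℝ) : Prop :=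
  ∀ t i, π.map (fun x => x t i) = μ t i

/-- `E_π[X_{t+1,i} | X_0,…,X_t]`. -/
noncomputable def condNext {T d : ℕ} (π : Measure (Path T d)) (t : ℕ) (ht : t + 1 < T)
    (i : Fin d) : Path T d → ℝ :=
  π[fun x => x ⟨t + 1, ht⟩ i | pastSigma T d t]

def IsMartingaleMeasure {T d : ℕ} (π : Measure (Path T d)) : Prop :=
  ∀ (t : ℕ) (ht : t + 1 < T) (i : Fin d),
    condNext π t ht i =ᵐ[π] fun x => x ⟨t, Nat.lt_of_succ_lt ht⟩ i

/-- The set `ℳ(μ̌)` of calibrated martingale measures. -/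
def MartSet {T d : ℕ} (μ : Fin T → Fin d → Measure ℝ) : Set (Measure (Path T d)) :=
  {π | IsProbabilityMeasure π ∧ HasMarginals π μ ∧ IsMartingaleMeasure π}

section CondExp

variable {Ω : Type*} {m m₀ : MeasurableSpace Ω} {μ : Measure Ω}

theorem integrable_mul_of_sq_eq_one {X Y : Ω → ℝ} (hY : Integrable Y μ)
    (hX : AEStronglyMeasurable X μ) (hX1 : ∀ᵐ ω ∂μ, X ω ^ 2 = 1) :
    Integrable (fun ω => X ω * Y ω) μ :=
  hY.bdd_mul hX (c := 1) <| by
    filter_upwards [hX1] with ω h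
    rw [Real.norm_eq_abs, ← sq_le_one_iff_abs_le_one, h]

theorem integral_mul_condExp (hm : m ≤ m₀) [SigmaFinite (μ.trim hm)] {f g : Ω → ℝ}
    (hf : StronglyMeasurable[m] f) (hfg : Integrable (f * g) μ) (hg : Integrable g μ) :
    ∫ ω, f ω * g ω ∂μ = ∫ ω, f ω * (μ[g | m]) ω ∂μ := by
  rw [← integral_condExp hm]
  exact integral_congr_ae (condExp_mul_of_stronglyMeasurable_left hf hfg hg)

-- Pulling out `X` gives `E[XY] = E[X²] = 1`, hence `E[(Y - X)²] = 2 - 2 E[XY] = 0`.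
theorem ae_eq_of_condExp_eq_of_sq_eq_one [IsProbabilityMeasure μ] (hm : m ≤ m₀) {X Y : Ω → ℝ}
    (hX : StronglyMeasurable[m] X) (hY : Integrable Y μ) (hX1 : ∀ᵐ ω ∂μ, X ω ^ 2 = 1)
    (hY1 : ∀ᵐ ω ∂μ, Y ω ^ 2 = 1) (hYX : μ[Y | m] =ᵐ[μ] X) : Y =ᵐ[μ] X := by
  have hXY : Integrable (fun ω => X ω * Y ω) μ :=
    integrable_mul_of_sq_eq_one hY (hX.mono hm).aestronglyMeasurable hX1
  have hcross : ∫ ω, X ω * Y ω ∂μ = 1 := by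
    rw [integral_mul_condExp hm hX hXY hY]
    calc ∫ ω, X ω * (μ[Y | m]) ω ∂μ = ∫ _, (1 : ℝ) ∂μ := by
          refine integral_congr_ae ?_
          filter_upwards [hYX, hX1] with ω h h1
          rw [h, ← sq, h1]
      _ = 1 := by simp
  have hsq : (fun ω => (Y ω - X ω) ^ 2) =ᵐ[μ] fun ω => 2 - 2 * (X ω * Y ω) := by
    filter_upwards [hX1, hY1] with ω h1 h2
    linear_combination h2 + h1
  have hzero : ∫ ω, (Y ω - X ω) ^ 2 ∂μ = 0 := by
    rw [integral_congr_ae hsq, integral_sub (integrable_const _) (hXY.const_mul 2),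
      integral_const_mul]
    simp [hcross]
  have hint : Integrable (fun ω => (Y ω - X ω) ^ 2) μ :=
    ((integrable_const 2).sub (hXY.const_mul 2)).congr hsq.symm
  filter_upwards [(integral_eq_zero_iff_of_nonneg (fun ω => sq_nonneg _) hint).mp hzero]
    with ω h
  simpa [sub_eq_zero] using h

end CondExp

theorem measurable_coord (T d : ℕ) (t : Fin T) (i : Fin d) :
    Measurable fun x : Path T d => x t i :=
  (measurable_pi_apply t).eval

theorem pastSigma_le (T d t : ℕ) : pastSigma T d t ≤ (inferInstance : MeasurableSpace (Path T d)) :=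
  iSup₂_le fun s _ => (measurable_pi_apply s).comap_le

theorem pastSigma_zero {T : ℕ} (d : ℕ) (hT : 0 < T) :
    pastSigma T d 0 = MeasurableSpace.comap (fun x : Path T d => x ⟨0, hT⟩) inferInstance := by
  refine le_antisymm (iSup₂_le fun s hs => ?_) (le_iSup₂_of_le ⟨0, hT⟩ le_rfl le_rfl)
  obtain rfl : s = ⟨0, hT⟩ := Fin.ext (Nat.le_zero.mp hs)
  exact le_rfl

theorem measurable_pastSigma_zero {T : ℕ} (d : ℕ) (hT : 0 < T) (i : Fin d) :
    Measurable[pastSigma T d 0] fun x : Path T d => x ⟨0, hT⟩ i := by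
  rw [pastSigma_zero d hT]
  exact (measurable_pi_apply i).comp (Measurable.of_comap_le le_rfl)

theorem isMartingaleMeasure_of_setIntegral_eq {d : ℕ} {π : Measure (Path 2 d)} [IsFiniteMeasure π]
    (hint : ∀ t i, Integrable (fun x => x t i) π)
    (heq : ∀ i, ∀ s : Set (Fin d → ℝ), MeasurableSet s →
      ∫ x in (fun x => x 0) ⁻¹' s, x 1 i ∂π = ∫ x in (fun x => x 0) ⁻¹' s, x 0 i ∂π) :
    IsMartingaleMeasure π := by
  intro t ht i
  obtain rfl : t = 0 := by omega
  refine (ae_eq_condExp_of_forall_setIntegral_eq (pastSigma_le 2 d 0) (hint 1 i)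
    (fun s _ _ => (hint 0 i).integrableOn) (fun s hs _ => ?_)
    (measurable_pastSigma_zero d two_pos i).stronglyMeasurable.aestronglyMeasurable).symm
  rw [pastSigma_zero d two_pos] at hs
  obtain ⟨s, hs, rfl⟩ := hs
  exact (heq i s hs).symm

noncomputable def rademacher : Measure ℝ :=
  ((1 : ℝ≥0∞) / 2) • (Measure.dirac (-1 : ℝ) + Measure.dirac (1 : ℝ))

noncomputable def uniformPmOneTwo : Measure ℝ :=
  ((1 : ℝ≥0∞) / 4) • (Measure.dirac (-2 : ℝ) + Measure.dirac (-1 : ℝ) +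
    Measure.dirac (1 : ℝ) + Measure.dirac (2 : ℝ))

instance : IsProbabilityMeasure rademacher := by
  constructor
  simp [rademacher, ENNReal.inv_two_add_inv_two]

instance : IsProbabilityMeasure uniformPmOneTwo := by
  constructor
  simp only [uniformPmOneTwo, Measure.smul_apply, Measure.add_apply, measure_univ, smul_eq_mul]
  exact (congrArg _ (by norm_num)).trans (ENNReal.div_mul_cancel four_ne_zero ENNReal.ofNat_ne_top)

theorem integrable_rademacher (f : ℝ → ℝ) : Integrable f rademacher :=
  ((integrable_dirac enorm_lt_top).add_measure (integrable_dirac enorm_lt_top)).smul_measure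
    (by norm_num)

theorem integral_rademacher (f : ℝ → ℝ) : ∫ x, f x ∂rademacher = (f (-1) + f 1) / 2 := by
  rw [rademacher, integral_smul_measure, integral_add_measure (integrable_dirac enorm_lt_top)
    (integrable_dirac enorm_lt_top), integral_dirac, integral_dirac]
  norm_num
  ring

theorem ae_sq_eq_one_rademacher : ∀ᵐ x ∂rademacher, x ^ 2 = 1 := by
  simp [rademacher]

theorem integrable_uniformPmOneTwo (f : ℝ → ℝ) : Integrable f uniformPmOneTwo :=
  ((((integrable_dirac enorm_lt_top).add_measure (integrable_dirac enorm_lt_top)).add_measure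
    (integrable_dirac enorm_lt_top)).add_measure (integrable_dirac enorm_lt_top)).smul_measure
    (by norm_num)

theorem integral_id_uniformPmOneTwo : ∫ x, x ∂uniformPmOneTwo = 0 := by
  have hI : ∀ a : ℝ, Integrable (fun x : ℝ => x) (Measure.dirac a) :=
    fun _ => integrable_dirac enorm_lt_top
  rw [uniformPmOneTwo, integral_smul_measure,
    integral_add_measure (((hI _).add_measure (hI _)).add_measure (hI _)) (hI _),
    integral_add_measure ((hI _).add_measure (hI _)) (hI _), integral_add_measure (hI _) (hI _)]
  simp

section PathLaw

variable (ρ β : Measure ℝ) (c : ℝ → ℝ)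

noncomputable def pathLaw : Measure (Path 2 2) :=
  (ρ.prod β).map fun p => ![![0, p.1], ![p.2 * c p.1, p.1]]

variable {ρ β c}

theorem map_coord_pathLaw (hc : Measurable c) (t i : Fin 2) :
    (pathLaw ρ β c).map (fun x => x t i) =
      (ρ.prod β).map fun p => ![![0, p.1], ![p.2 * c p.1, p.1]] t i := by
  rw [pathLaw, Measure.map_map (measurable_coord 2 2 t i) (by fun_prop)]
  rfl

theorem isProbabilityMeasure_pathLaw [IsProbabilityMeasure ρ] [IsProbabilityMeasure β]
    (hc : Measurable c) : IsProbabilityMeasure (pathLaw ρ β c) :=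
  Measure.isProbabilityMeasure_map (by fun_prop)

theorem hasMarginals_pathLaw [IsProbabilityMeasure ρ] [IsProbabilityMeasure β]
    (hc : Measurable c) {μ : Fin 2 → Fin 2 → Measure ℝ}
    (h00 : μ 0 0 = Measure.dirac 0) (h01 : μ 0 1 = ρ) (h11 : μ 1 1 = ρ)
    (h10 : μ 1 0 = (ρ.prod β).map fun p => p.2 * c p.1) : HasMarginals (pathLaw ρ β c) μ := by
  intro t i
  rw [map_coord_pathLaw hc]
  fin_cases t <;> fin_cases i
  · simp [h00, Measure.map_const]
  · simp [h01]
  · simp [h10]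
  · simp [h11]

theorem integrable_coord_pathLaw [IsFiniteMeasure β] (hc : Measurable c) (hρ : Integrable id ρ)
    (hcρ : Integrable c ρ) (hβ : Integrable id β) (t i : Fin 2) :
    Integrable (fun x => x t i) (pathLaw ρ β c) := by
  rw [pathLaw, integrable_map_measure (measurable_coord 2 2 t i).aestronglyMeasurable
    (by fun_prop)]
  fin_cases t <;> fin_cases i
  · exact integrable_zero _ _ _
  · exact hρ.comp_fst β
  · exact (hcρ.mul_prod hβ).congr (ae_of_all _ fun p => mul_comm _ _)
  · exact hρ.comp_fst β

theorem isMartingaleMeasure_pathLaw [IsProbabilityMeasure ρ] [IsProbabilityMeasure β]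
    (hc : Measurable c) (hρ : Integrable id ρ) (hcρ : Integrable c ρ) (hβ : Integrable id β)
    (hβ₀ : ∫ s, s ∂β = 0) :
    IsMartingaleMeasure (pathLaw ρ β c) := by
  have := isProbabilityMeasure_pathLaw (ρ := ρ) (β := β) hc
  refine isMartingaleMeasure_of_setIntegral_eq (integrable_coord_pathLaw hc hρ hcρ hβ)
    fun i s hs => ?_
  rw [pathLaw, setIntegral_map (hs.preimage (measurable_pi_apply 0))
      (measurable_coord 2 2 1 i).aestronglyMeasurable (by fun_prop),
    setIntegral_map (hs.preimage (measurable_pi_apply 0))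
      (measurable_coord 2 2 0 i).aestronglyMeasurable (by fun_prop)]
  fin_cases i
  · have hset : (fun p : ℝ × ℝ => ![![0, p.1], ![p.2 * c p.1, p.1]]) ⁻¹' ((fun x => x 0) ⁻¹' s)
        = ((fun e => ![0, e]) ⁻¹' s) ×ˢ Set.univ := by
      ext p
      simp
    simp only [hset, Fin.zero_eta, Fin.isValue, Matrix.cons_val_zero, Matrix.cons_val_one,
      integral_zero]
    simp_rw [mul_comm _ (c _)]
    rw [setIntegral_prod_mul c (fun s => s), setIntegral_univ, hβ₀, mul_zero]
  · rfl

theorem integral_mul_sq_pathLaw [SFinite ρ] [SFinite β] (hc : Measurable c) :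
    ∫ x, x 0 1 * x 1 0 ^ 2 ∂pathLaw ρ β c = (∫ e, e * c e ^ 2 ∂ρ) * ∫ s, s ^ 2 ∂β := by
  rw [pathLaw, integral_map (by fun_prop) (by fun_prop), ← integral_prod_mul]
  congr 1 with p
  show p.1 * (p.2 * c p.1) ^ 2 = p.1 * c p.1 ^ 2 * p.2 ^ 2
  ring

end PathLaw

theorem map_mul_rademacher_prod_rademacher :
    (rademacher.prod rademacher).map (fun p => p.2 * ((3 + p.1) / 2)) = uniformPmOneTwo := by
  have hΦ : Measurable fun p : ℝ × ℝ => p.2 * ((3 + p.1) / 2) := by fun_prop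
  simp only [rademacher, Measure.prod_smul_left, Measure.prod_smul_right, Measure.add_prod,
    Measure.prod_add, Measure.dirac_prod_dirac, Measure.map_smul, Measure.map_add _ _ hΦ,
    Measure.map_dirac' hΦ, smul_add, smul_smul]
  norm_num
  rw [← ENNReal.mul_inv (by norm_num) (by norm_num), uniformPmOneTwo]
  norm_num [smul_add]
  abel

theorem integral_mul_eq_zero_of_mem_martSet {μ : Fin 2 → Fin 2 → Measure ℝ}
    (h00 : μ 0 0 = Measure.dirac 0) (h01 : μ 0 1 = rademacher) (h11 : μ 1 1 = rademacher)
    (h10 : Integrable id (μ 1 0)) {π : Measure (Path 2 2)} (hπ : π ∈ MartSet μ) :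
    ∫ x, x 1 0 * x 1 1 ∂π = 0 := by
  obtain ⟨hprob, hmarg, hmart⟩ := hπ
  have hm := pastSigma_le 2 2 0
  have hmeas : ∀ t i, AEMeasurable (fun x : Path 2 2 => x t i) π :=
    fun t i => (measurable_coord 2 2 t i).aemeasurable
  have hX00 : ∀ᵐ x ∂π, x 0 0 = 0 :=
    ae_of_ae_map (p := (· = 0)) (hmeas 0 0) (by simp [hmarg 0 0, h00])
  have hX01 : ∀ᵐ x ∂π, x 0 1 ^ 2 = 1 :=
    ae_of_ae_map (p := (· ^ 2 = 1)) (hmeas 0 1) (hmarg 0 1 ▸ h01 ▸ ae_sq_eq_one_rademacher)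
  have hX11 : ∀ᵐ x ∂π, x 1 1 ^ 2 = 1 :=
    ae_of_ae_map (p := (· ^ 2 = 1)) (hmeas 1 1) (hmarg 1 1 ▸ h11 ▸ ae_sq_eq_one_rademacher)
  have hint : ∀ t i, Integrable id (μ t i) → Integrable (fun x : Path 2 2 => x t i) π :=
    fun t i h => (integrable_map_measure aestronglyMeasurable_id (hmeas t i)).mp (hmarg t i ▸ h)
  have hint11 := hint 1 1 (h11 ▸ integrable_rademacher id)
  have hint10 := hint 1 0 h10
  have hX01m : StronglyMeasurable[pastSigma 2 2 0] fun x : Path 2 2 => x 0 1 :=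
    (measurable_pastSigma_zero 2 two_pos 1).stronglyMeasurable
  have hsame : (fun x => x 1 1) =ᵐ[π] fun x => x 0 1 :=
    ae_eq_of_condExp_eq_of_sq_eq_one hm hX01m hint11 hX01 hX11 (hmart 0 one_lt_two 1)
  calc ∫ x, x 1 0 * x 1 1 ∂π = ∫ x, x 0 1 * x 1 0 ∂π :=
        integral_congr_ae <| hsame.mono fun x (h : x 1 1 = x 0 1) => by
          simp only [h, mul_comm]
    _ = ∫ x, x 0 1 * (π[fun x => x 1 0 | pastSigma 2 2 0]) x ∂π :=
        integral_mul_condExp hm hX01m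
          (integrable_mul_of_sq_eq_one hint10 (hmeas 0 1).aestronglyMeasurable hX01) hint10
    _ = 0 := integral_eq_zero_of_ae <| by
        filter_upwards [hmart 0 one_lt_two 0, hX00] with x h h0
        show x 0 1 * condNext π 0 one_lt_two 0 x = 0
        rw [h.trans h0, mul_zero]

theorem pathLaw_mem_martSet {ρ β : Measure ℝ} [IsProbabilityMeasure ρ] [IsProbabilityMeasure β]
    {c : ℝ → ℝ} (hc : Measurable c) (hρ : Integrable id ρ) (hcρ : Integrable c ρ)
    (hβ : Integrable id β) (hβ₀ : ∫ s, s ∂β = 0) {μ : Fin 2 → Fin 2 → Measure ℝ}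
    (h00 : μ 0 0 = Measure.dirac 0) (h01 : μ 0 1 = ρ) (h11 : μ 1 1 = ρ)
    (h10 : μ 1 0 = (ρ.prod β).map fun p => p.2 * c p.1) : pathLaw ρ β c ∈ MartSet μ :=
  ⟨isProbabilityMeasure_pathLaw hc, hasMarginals_pathLaw hc h00 h01 h11 h10,
    isMartingaleMeasure_pathLaw hc hρ hcρ hβ hβ₀⟩

theorem integral_id_rademacher : ∫ x, x ∂rademacher = 0 := by
  norm_num [integral_rademacher fun x => x]

theorem pathLaw_uniformPmOneTwo_ne :
    pathLaw rademacher uniformPmOneTwo (fun _ => 1) ≠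
      pathLaw rademacher rademacher (fun e => (3 + e) / 2) := by
  intro h
  have := congrArg (fun π => ∫ x, x 0 1 * x 1 0 ^ 2 ∂π) h
  simp only [integral_mul_sq_pathLaw measurable_const,
    integral_mul_sq_pathLaw (by fun_prop : Measurable fun e : ℝ => (3 + e) / 2),
    integral_rademacher] at this
  norm_num at this

/-- Example: non-uniqueness of martingale measures while all of them are
optimal for the covariance cost `c(x) = x_{2,1} x_{2,2}`. With `μ_{1,1} = δ_0`,
`μ_{2,1} = (1/4)(δ_{−2}+δ_{−1}+δ_1+δ_2)` and `μ_{1,2} = μ_{2,2} = (1/2)(δ_{−1}+δ_1)`,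
the set `ℳ(μ̌)` is not a singleton, yet `E_π[X_{2,1}X_{2,2}] = 0` for every `π ∈ ℳ(μ̌)`,
so that every element of `ℳ(μ̌)` is an optimizer of both the maximization and the
minimization problem. -/
theorem example_nonunique_optimizers (μ : Fin 2 → Fin 2 → Measure ℝ)
    (h11 : μ 0 0 = Measure.dirac (0 : ℝ))
    (h21 : μ 1 0 = ((1 : ℝ≥0∞) / 4) •
      (Measure.dirac (-2 : ℝ) + Measure.dirac (-1 : ℝ) +
        Measure.dirac (1 : ℝ) + Measure.dirac (2 : ℝ)))
    (h12 : μ 0 1 = ((1 : ℝ≥0∞) / 2) • (Measure.dirac (-1 : ℝ) + Measure.dirac (1 : ℝ)))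
    (h22 : μ 1 1 = ((1 : ℝ≥0∞) / 2) • (Measure.dirac (-1 : ℝ) + Measure.dirac (1 : ℝ))) :
    (∃ π ∈ MartSet μ, ∃ π' ∈ MartSet μ, π ≠ π') ∧
    (∀ π ∈ MartSet μ, ∫ x, x 1 0 * x 1 1 ∂π = 0) ∧
    (∀ π ∈ MartSet μ,
      (∀ π' ∈ MartSet μ, ∫ x, x 1 0 * x 1 1 ∂π' ≤ ∫ x, x 1 0 * x 1 1 ∂π) ∧
      (∀ π' ∈ MartSet μ, ∫ x, x 1 0 * x 1 1 ∂π ≤ ∫ x, x 1 0 * x 1 1 ∂π')) := by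
  have hzero : ∀ π ∈ MartSet μ, ∫ x, x 1 0 * x 1 1 ∂π = 0 := fun π hπ =>
    integral_mul_eq_zero_of_mem_martSet h11 h12 h22 (h21 ▸ integrable_uniformPmOneTwo id) hπ
  have hindep : pathLaw rademacher uniformPmOneTwo (fun _ => 1) ∈ MartSet μ :=
    pathLaw_mem_martSet measurable_const (integrable_rademacher _) (integrable_rademacher _)
      (integrable_uniformPmOneTwo _) integral_id_uniformPmOneTwo h11 h12 h22
      (h21.trans (show uniformPmOneTwo = _ by simp))
  have hcoupled : pathLaw rademacher rademacher (fun e => (3 + e) / 2) ∈ MartSet μ :=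
    pathLaw_mem_martSet (by fun_prop) (integrable_rademacher _) (integrable_rademacher _)
      (integrable_rademacher _) integral_id_rademacher h11 h12 h22
      (h21.trans map_mul_rademacher_prod_rademacher.symm)
  refine ⟨⟨_, hindep, _, hcoupled, pathLaw_uniformPmOneTwo_ne⟩, hzero,
    fun π hπ => ⟨fun π' hπ' => ?_, fun π' hπ' => ?_⟩⟩ <;> rw [hzero π hπ, hzero π' hπ']

end MMOT
end
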